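/- arXiv:1603.03117 — 5 statements merged into one kernel-verified Lean document; each statement's English description precedes it below -/
import Mathlib

section
/- Assume f(0) = 0 and f'_y(0) ≠ 0. Let m > 0 and let T̃(x,y) be the unique solution of X(T̃(x,y),x,y) = −x with |T̃(x,y)| ≤ (4m/|f'_y(0)|)·y², defined for |x| ≤ m|y|³ and |y| small. Then T̃(x,y)·(y/x) → −2/f'_y(0) as |x| ≤ m|y|³, x ≠ 0, y → 0; that is, for every ε > 0 there exists δ > 0 such that |T̃(x,y)·(y/x) + 2/f'_y(0)| ≤ ε whenever 0 < |y| ≤ δ, 0 < |x| ≤ m|y|³. -/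
open Set Filter Topology

/-- Partial derivative in the second variable. -/
noncomputable def pdy (f : ℝ → ℝ → ℝ) (a b : ℝ) : ℝ := deriv (fun y => f a y) b

/-!
Along an orbit starting at `(x, y)` with `|x| ≤ m|y|³`, the velocity `ẋ = f(X, Y)` equals
`f'_y(0) y + O(y²)` for `|t| ≲ y²`: this is the second-order Taylor expansion of
`(t, x, y) ↦ f(X(t,x,y), Y(t,x,y))` at the origin, whose coefficient of `y` is `f'_y(0)` because
`X(0,x,y) = x` and `Y(0,x,y) = y`. The mean value inequality on `[0, T̃]` then gives
`-2x = f'_y(0) y T̃ + O(y² |T̃|)`, which forces `y T̃ = O(x)` and hence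
`T̃ y / x = -2 / f'_y(0) + O(|y|)`.
-/

open Asymptotics Metric

theorem ContDiffAt.isBigO_sub_sub_fderiv {E G : Type*} [NormedAddCommGroup E] [NormedSpace ℝ E]
    [NormedAddCommGroup G] [NormedSpace ℝ G] {F : E → G} {x₀ : E} (hF : ContDiffAt ℝ 2 F x₀) :
    (fun x => F x - F x₀ - fderiv ℝ F x₀ (x - x₀)) =O[𝓝 x₀] fun x => ‖x - x₀‖ ^ 2 := by
  obtain ⟨c, hc, hlip⟩ := ((hF.fderiv_right (m := 1) le_rfl).differentiableAt
    one_ne_zero).isBigO_sub.exists_nonneg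
  obtain ⟨ρ, hρ, hball⟩ := eventually_nhds_iff_ball.1 ((hF.eventually (by simp)).and hlip.bound)
  refine .of_bound c ?_
  filter_upwards [ball_mem_nhds x₀ hρ] with x hx
  have hsub : closedBall x₀ ‖x - x₀‖ ⊆ ball x₀ ρ :=
    closedBall_subset_ball (by rwa [← dist_eq_norm])
  have hmvt := (convex_closedBall x₀ ‖x - x₀‖).norm_image_sub_le_of_norm_fderiv_le'
    (fun y hy => (hball y (hsub hy)).1.differentiableAt (by simp))
    (fun y hy => (hball y (hsub hy)).2.trans
      (mul_le_mul_of_nonneg_left (mem_closedBall_iff_norm.1 hy) hc))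
    (mem_closedBall_self (norm_nonneg _)) (mem_closedBall_iff_norm.2 le_rfl)
  simpa [sq, mul_assoc] using hmvt

theorem sq_norm_le_of_norm_le_one {t x y : ℝ} (h : ‖(t, x, y)‖ ≤ 1) :
    ‖(t, x, y)‖ ^ 2 ≤ |t| + |x| + y ^ 2 := by
  simp only [Prod.norm_def, Real.norm_eq_abs, sup_le_iff] at h ⊢
  obtain ⟨ht, hx, hy⟩ := h
  have := abs_nonneg t; have := abs_nonneg x
  rcases max_cases |t| (max |x| |y|) with ⟨h1, -⟩ | ⟨h1, -⟩ <;> rw [h1]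
  · nlinarith [sq_nonneg y]
  · rcases max_cases |x| |y| with ⟨h2, -⟩ | ⟨h2, -⟩ <;> rw [h2]
    · nlinarith [sq_nonneg y]
    · rw [sq_abs]; linarith

theorem ContDiffAt.exists_eventually_abs_sub_mul_le {H : ℝ × ℝ × ℝ → ℝ} {a : ℝ}
    (hH : ContDiffAt ℝ 2 H 0) (h0 : H 0 = 0) (ha : HasDerivAt (fun y => H (0, 0, y)) a 0) :
    ∃ C, 0 ≤ C ∧ ∀ᶠ p in 𝓝 0, |H p - a * p.2.2| ≤ C * (|p.1| + |p.2.1| + p.2.2 ^ 2) := by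
  set D := fderiv ℝ H 0
  have hDa : D (0, 0, 1) = a := by
    have hline : HasDerivAt (fun y : ℝ => ((0 : ℝ), (0 : ℝ), y)) (0, 0, 1) 0 :=
      (hasDerivAt_const _ _).prodMk ((hasDerivAt_const _ _).prodMk (hasDerivAt_id _))
    exact ((hH.differentiableAt (by norm_num)).hasFDerivAt.comp_hasDerivAt 0 hline).unique ha
  obtain ⟨L, hL, hTaylor⟩ := hH.isBigO_sub_sub_fderiv.exists_nonneg
  refine ⟨‖D‖ + L, by positivity, ?_⟩
  filter_upwards [hTaylor.bound, closedBall_mem_nhds 0 one_pos] with ⟨t, x, y⟩ hp hp1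
  have hsplit : D (t, x, y) = D (t, x, 0) + a * y := by
    rw [← hDa, mul_comm, ← smul_eq_mul, ← map_smul, ← map_add]; simp
  have hlin : |D (t, x, 0)| ≤ ‖D‖ * (|t| + |x|) := by
    refine (D.le_opNorm _).trans (mul_le_mul_of_nonneg_left ?_ (norm_nonneg D))
    simp [Prod.norm_def]
  rw [mem_closedBall_zero_iff] at hp1
  simp only [h0, sub_zero, Real.norm_eq_abs, abs_pow, abs_norm] at hp
  have hsq := sq_norm_le_of_norm_le_one hp1
  calc |H (t, x, y) - a * y| = |(H (t, x, y) - D (t, x, y)) + D (t, x, 0)| := by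
        rw [hsplit]; ring_nf
    _ ≤ L * (|t| + |x| + y ^ 2) + ‖D‖ * (|t| + |x|) :=
        (abs_add_le _ _).trans (add_le_add (hp.trans (mul_le_mul_of_nonneg_left hsq hL)) hlin)
    _ ≤ (‖D‖ + L) * (|t| + |x| + y ^ 2) := by nlinarith [norm_nonneg D, sq_nonneg y]

theorem exists_eventually_abs_velocity_sub_le {f : ℝ → ℝ → ℝ} {X Y : ℝ → ℝ → ℝ → ℝ}
    (hf : ContDiffAt ℝ 2 (fun q : ℝ × ℝ => f q.1 q.2) 0)
    (hX : ContDiffAt ℝ 2 (fun p : ℝ × ℝ × ℝ => X p.1 p.2.1 p.2.2) 0)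
    (hY : ContDiffAt ℝ 2 (fun p : ℝ × ℝ × ℝ => Y p.1 p.2.1 p.2.2) 0)
    (hinit : ∀ y, X 0 0 y = 0 ∧ Y 0 0 y = y) (hf0 : f 0 0 = 0) :
    ∃ C, 0 ≤ C ∧ ∀ᶠ p : ℝ × ℝ × ℝ in 𝓝 0,
      |f (X p.1 p.2.1 p.2.2) (Y p.1 p.2.1 p.2.2) - pdy f 0 0 * p.2.2| ≤
        C * (|p.1| + |p.2.1| + p.2.2 ^ 2) := by
  have hslice : (fun y => f (X 0 0 y) (Y 0 0 y)) = fun y => f 0 y := by ext y; simp [hinit]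
  have hline : DifferentiableAt ℝ (fun y : ℝ => ((0 : ℝ), y)) 0 := by fun_prop
  refine ContDiffAt.exists_eventually_abs_sub_mul_le ?_ (by simp [hinit, hf0]) ?_
  · exact ContDiffAt.comp (g := fun q : ℝ × ℝ => f q.1 q.2) 0
      (by simpa [hinit, Prod.mk_zero_zero] using hf) (hX.prodMk hY)
  · simp only [hslice]
    exact ((hf.differentiableAt (by norm_num)).comp (0 : ℝ) hline).hasDerivAt

theorem eventually_forall_cusp {Q : ℝ × ℝ × ℝ → Prop} (hQ : ∀ᶠ p in 𝓝 0, Q p) (K m : ℝ) :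
    ∀ᶠ y in 𝓝 0, ∀ t x, |t| ≤ K * y ^ 2 → |x| ≤ m * |y| ^ 3 → Q (t, x, y) := by
  obtain ⟨r, hr, hQr⟩ := eventually_nhds_iff_ball.1 hQ
  have hsmall : ∀ f : ℝ → ℝ, Continuous f → f 0 = 0 → ∀ᶠ y in 𝓝 0, f y < r := fun f hf h0 =>
    hf.continuousAt.eventually_lt continuousAt_const (by rwa [h0])
  filter_upwards [hsmall (fun y => |y|) (by fun_prop) (by simp),
    hsmall (fun y => K * y ^ 2) (by fun_prop) (by simp),
    hsmall (fun y => m * |y| ^ 3) (by fun_prop) (by simp)] with y hy hKy hmy t x ht hx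
  refine hQr _ (mem_ball_zero_iff.2 ?_)
  simp only [Prod.norm_def, Real.norm_eq_abs, max_lt_iff]
  exact ⟨ht.trans_lt hKy, hx.trans_lt hmy, hy⟩

theorem abs_add_abs_add_sq_le_of_cusp {t x y K m : ℝ} (hm : 0 ≤ m) (hy : |y| ≤ 1)
    (ht : |t| ≤ K * y ^ 2) (hx : |x| ≤ m * |y| ^ 3) : |t| + |x| + y ^ 2 ≤ (K + m + 1) * y ^ 2 := by
  have : m * |y| ^ 3 ≤ m * y ^ 2 := by
    rw [← sq_abs y]
    exact mul_le_mul_of_nonneg_left (by nlinarith [abs_nonneg y]) hm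
  linarith

theorem Convex.abs_sub_sub_mul_le_of_hasDerivAt {s : Set ℝ} (hs : Convex ℝ s) {φ φ' : ℝ → ℝ}
    {v M : ℝ} (hφ : ∀ t ∈ s, HasDerivAt φ (φ' t) t) (hbound : ∀ t ∈ s, |φ' t - v| ≤ M)
    {u w : ℝ} (hu : u ∈ s) (hw : w ∈ s) : |φ w - φ u - v * (w - u)| ≤ M * |w - u| := by
  have := hs.norm_image_sub_le_of_norm_hasDerivWithin_le (f := fun t => φ t - v * t)
    (fun t ht => ((hφ t ht).sub ((hasDerivAt_id t).const_mul v)).hasDerivWithinAt)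
    (by simpa using hbound) hu hw
  simp only [Real.norm_eq_abs] at this
  convert this using 2; ring

theorem abs_mul_div_add_two_div_le {a x y T C : ℝ} (ha : a ≠ 0) (hx : x ≠ 0) (hC0 : 0 ≤ C) (h : |a * y * T + 2 * x| ≤ C * y ^ 2 * |T|) (hC : 2 * C * |y| ≤ |a|) :
    |T * (y / x) + 2 / a| ≤ 4 * C * |y| / a ^ 2 := by
  have hCy : C * y ^ 2 * |T| ≤ |a| * |y| * |T| / 2 := by
    rw [← sq_abs]; nlinarith [abs_nonneg y, abs_nonneg T, mul_nonneg (abs_nonneg y) (abs_nonneg T)]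
  -- the error term `C y² |T|` is at most half of `|a y T|`, which is therefore at most `4 |x|`
  have hT : |a| * |y| * |T| ≤ 4 * |x| := by
    have := abs_sub_abs_le_abs_sub (a * y * T) (-(2 * x))
    simp only [sub_neg_eq_add, abs_neg, abs_mul, abs_two] at this
    linarith
  have : T * (y / x) + 2 / a = (a * y * T + 2 * x) / (a * x) := by field_simp
  rw [this, abs_div, abs_mul, div_le_div_iff₀ (by positivity) (by positivity), ← sq_abs a]
  calc |a * y * T + 2 * x| * |a| ^ 2 ≤ C * |y| * |a| * (|a| * |y| * |T|) := by
        rw [← sq_abs y] at h; nlinarith [sq_nonneg |a|]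
    _ ≤ C * |y| * |a| * (4 * |x|) := by gcongr
    _ = 4 * C * |y| * (|a| * |x|) := by ring

theorem stmt_3_general
    (f g : ℝ → ℝ → ℝ) (X Y : ℝ → ℝ → ℝ → ℝ)
    (U : Set (ℝ × ℝ)) (hU : U ∈ nhds ((0 : ℝ), (0 : ℝ)))
    (hf : ContDiffOn ℝ 4 (fun p : ℝ × ℝ => f p.1 p.2) U)
    (V : Set (ℝ × ℝ × ℝ)) (hV : V ∈ nhds (((0 : ℝ), (0 : ℝ), (0 : ℝ)) : ℝ × ℝ × ℝ))
    (hX : ContDiffOn ℝ 4 (fun p : ℝ × ℝ × ℝ => X p.1 p.2.1 p.2.2) V)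
    (hY : ContDiffOn ℝ 4 (fun p : ℝ × ℝ × ℝ => Y p.1 p.2.1 p.2.2) V)
    (hode : ∀ t x y : ℝ, (t, x, y) ∈ V →
      HasDerivAt (fun s => X s x y) (f (X t x y) (Y t x y)) t ∧
      HasDerivAt (fun s => Y s x y) (g (X t x y) (Y t x y)) t)
    (hinit : ∀ x y : ℝ, X 0 x y = x ∧ Y 0 x y = y)
    (hf0 : f 0 0 = 0)
    (hfy0 : pdy f 0 0 ≠ 0)
    (m : ℝ) (hm : 0 < m) (δ₀ : ℝ) (hδ₀ : 0 < δ₀)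
    (Tt : ℝ → ℝ → ℝ)
    (hTt : ∀ x y : ℝ, |x| ≤ m * |y| ^ 3 → 0 < |y| → |y| ≤ δ₀ →
      X (Tt x y) x y = -x ∧
      |Tt x y| ≤ 4 * m / |pdy f 0 0| * y ^ 2 ∧
      ∀ t : ℝ, |t| ≤ 4 * m / |pdy f 0 0| * y ^ 2 → X t x y = -x → t = Tt x y) :
    ∀ ε > (0 : ℝ), ∃ δ > (0 : ℝ), ∀ x y : ℝ,
      0 < |y| → |y| ≤ δ → 0 < |x| → |x| ≤ m * |y| ^ 3 →
      |Tt x y * (y / x) + 2 / pdy f 0 0| ≤ ε := by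
  intro ε hε
  set a := pdy f 0 0
  set K := 4 * m / |a|
  obtain ⟨C, hC0, hC⟩ := exists_eventually_abs_velocity_sub_le
    ((hf.contDiffAt hU).of_le (by norm_num)) ((hX.contDiffAt hV).of_le (by norm_num))
    ((hY.contDiffAt hV).of_le (by norm_num)) (hinit 0) hf0
  set C' := C * (K + m + 1)
  have habs : Tendsto (fun y : ℝ => |y|) (𝓝 0) (𝓝 0) := by
    simpa using continuous_abs.tendsto (0 : ℝ)
  have hsmall : ∀ᶠ y in 𝓝 (0 : ℝ),
      |y| < δ₀ ∧ |y| < 1 ∧ 2 * C' * |y| < |a| ∧ 4 * C' * |y| / a ^ 2 < ε := by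
    refine (habs.eventually_lt_const hδ₀).and ((habs.eventually_lt_const one_pos).and
      (((habs.const_mul _).eventually_lt_const ?_).and
      (((habs.const_mul _).div_const _).eventually_lt_const ?_))) <;> simp [hfy0, hε]
  obtain ⟨δ, hδ, hδP⟩ := nhds_basis_closedBall.eventually_iff.1
    ((eventually_forall_cusp ((show ∀ᶠ p in 𝓝 0, p ∈ V from hV).and hC) K m).and hsmall)
  refine ⟨δ, hδ, fun x y hy hyδ hx hxm => ?_⟩
  obtain ⟨hflow, hyδ₀, hy1, hCa, hCε⟩ := hδP (mem_closedBall_zero_iff.2 hyδ)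
  obtain ⟨hXT, hT, -⟩ := hTt x y hxm hy hyδ₀.le
  have hvel : ∀ t ∈ closedBall (0 : ℝ) (K * y ^ 2), HasDerivAt (fun s => X s x y)
      (f (X t x y) (Y t x y)) t ∧ |f (X t x y) (Y t x y) - a * y| ≤ C' * y ^ 2 := by
    intro t ht
    rw [mem_closedBall_zero_iff, Real.norm_eq_abs] at ht
    obtain ⟨htV, hbound⟩ := hflow t x ht hxm
    refine ⟨(hode t x y htV).1, hbound.trans ?_⟩
    rw [mul_assoc]
    exact mul_le_mul_of_nonneg_left (abs_add_abs_add_sq_le_of_cusp hm.le hy1.le ht hxm) hC0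
  have hmvt := (convex_closedBall (0 : ℝ) (K * y ^ 2)).abs_sub_sub_mul_le_of_hasDerivAt
    (fun t ht => (hvel t ht).1) (fun t ht => (hvel t ht).2)
    (mem_closedBall_self (by positivity)) (mem_closedBall_zero_iff.2 hT)
  rw [(hinit x y).1, hXT, sub_zero] at hmvt
  refine (abs_mul_div_add_two_div_le hfy0 (abs_pos.1 hx) (by positivity) ?_
    hCa.le).trans hCε.le
  rw [← abs_neg]
  convert hmvt using 2
  ring

/-- Lemma 2.2, asymptotics of the crossing time:
`T̃(x,y)·(y/x) → -2/f'_y(0)` as `|x| ≤ m|y|³`, `x ≠ 0`, `y → 0`. -/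
theorem stmt_3
    (f g : ℝ → ℝ → ℝ) (X Y : ℝ → ℝ → ℝ → ℝ)
    (U : Set (ℝ × ℝ)) (hU : U ∈ nhds ((0 : ℝ), (0 : ℝ)))
    (hf : ContDiffOn ℝ 4 (fun p : ℝ × ℝ => f p.1 p.2) U)
    (hg : ContDiffOn ℝ 4 (fun p : ℝ × ℝ => g p.1 p.2) U)
    (V : Set (ℝ × ℝ × ℝ)) (hV : V ∈ nhds (((0 : ℝ), (0 : ℝ), (0 : ℝ)) : ℝ × ℝ × ℝ))
    (hX : ContDiffOn ℝ 4 (fun p : ℝ × ℝ × ℝ => X p.1 p.2.1 p.2.2) V)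
    (hY : ContDiffOn ℝ 4 (fun p : ℝ × ℝ × ℝ => Y p.1 p.2.1 p.2.2) V)
    (hode : ∀ t x y : ℝ, (t, x, y) ∈ V →
      HasDerivAt (fun s => X s x y) (f (X t x y) (Y t x y)) t ∧
      HasDerivAt (fun s => Y s x y) (g (X t x y) (Y t x y)) t)
    (hinit : ∀ x y : ℝ, X 0 x y = x ∧ Y 0 x y = y)
    (hf0 : f 0 0 = 0)
    (hfy0 : pdy f 0 0 ≠ 0)
    (m : ℝ) (hm : 0 < m) (δ₀ : ℝ) (hδ₀ : 0 < δ₀)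
    (Tt : ℝ → ℝ → ℝ)
    (hTt : ∀ x y : ℝ, |x| ≤ m * |y| ^ 3 → 0 < |y| → |y| ≤ δ₀ →
      X (Tt x y) x y = -x ∧
      |Tt x y| ≤ 4 * m / |pdy f 0 0| * y ^ 2 ∧
      ∀ t : ℝ, |t| ≤ 4 * m / |pdy f 0 0| * y ^ 2 → X t x y = -x → t = Tt x y) :
    ∀ ε > (0 : ℝ), ∃ δ > (0 : ℝ), ∀ x y : ℝ,
      0 < |y| → |y| ≤ δ → 0 < |x| → |x| ≤ m * |y| ^ 3 →
      |Tt x y * (y / x) + 2 / pdy f 0 0| ≤ ε :=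
  stmt_3_general f g X Y U hU hf V hV hX hY hode hinit hf0 hfy0 m hm δ₀ hδ₀ Tt hTt
end

section
/- Assume f(0) = 0 and f'_y(0)·g(0) ≠ 0. Let T(x,y) be the return-time function of Lemma 2.1 (the unique nonzero solution of X(T(x,y),x,y) = x near 0 for y ≠ u(x), with T(x,u(x)) = 0), and let 𝒫(x,y) = Y(T(x,y),x,y). Then for any m > 0 and every ε ∈ (0,1) there exists δ > 0 such that for all |x| ≤ m·δ³: (i) if y ∈ [∛(|x|/m), δ] then 𝒫(x,y) ∈ [−(1+ε)·δ, −(1−ε)·∛(|x|/m)], and (ii) if y ∈ [−δ, −∛(|x|/m)] then 𝒫(x,y) ∈ [(1−ε)·∛(|x|/m), (1+ε)·δ]. -/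
/-
Near the origin the orbit through `(0, y)` satisfies `X(t,0,y) = t f(0,y) + a t²/2 + o(t²)` with
`a = g(0,0) f'_y(0)`: since `f(0,0) = 0`, the second time derivative of `X` at the origin is
`Df(0) (f, g)(0) = Df(0) (0, g(0,0))`. The return condition `X(T(0,y),0,y) = 0` with `T(0,y) ≠ 0`
therefore forces `f(0,y) + a T(0,y)/2 = o(T(0,y))`, whence `∂_y T(0,0) = -2 / g(0,0)` and
`∂_y 𝒫(0,0) = g(0,0) ∂_y T(0,0) + 1 = -1`. As `𝒫` is differentiable at the origin,
`𝒫(x,y) = -y + O(|x|) + o(|y|)`, and on the cusp `|x| ≤ m |y|³` the `x`-term is `o(|y|)` too;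
so `|𝒫(x,y) + y| ≤ ε |y|` there, which gives both inclusions.
-/

open Set Filter Topology

/-- Real cube root (for nonnegative arguments). -/
noncomputable def cbrt (s : ℝ) : ℝ := s ^ ((1 : ℝ) / 3)

theorem apply_pair_eq (L : ℝ × ℝ →L[ℝ] ℝ) (x y : ℝ) : L (x, y) = x * L (1, 0) + y * L (0, 1) := by
  have hxy : ((x, y) : ℝ × ℝ) = x • ((1 : ℝ), (0 : ℝ)) + y • ((0 : ℝ), (1 : ℝ)) := by simp
  rw [hxy, map_add, map_smul, map_smul, smul_eq_mul, smul_eq_mul]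

theorem hasDerivAt_fderiv_apply_zero_one {F : ℝ → ℝ → ℝ} {a b : ℝ}
    (h : DifferentiableAt ℝ (fun p : ℝ × ℝ => F p.1 p.2) (a, b)) :
    HasDerivAt (F a) (fderiv ℝ (fun p : ℝ × ℝ => F p.1 p.2) (a, b) (0, 1)) b :=
  h.hasFDerivAt.comp_hasDerivAt b ((hasDerivAt_const b a).prodMk (hasDerivAt_id b))

theorem hasDerivAt_fderiv_apply_one_zero {F : ℝ → ℝ → ℝ} {a b : ℝ}
    (h : DifferentiableAt ℝ (fun p : ℝ × ℝ => F p.1 p.2) (a, b)) :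
    HasDerivAt (F · b) (fderiv ℝ (fun p : ℝ × ℝ => F p.1 p.2) (a, b) (1, 0)) a :=
  h.hasFDerivAt.comp_hasDerivAt (l := fun p : ℝ × ℝ => F p.1 p.2) a
    ((hasDerivAt_id' a).prodMk (hasDerivAt_const a b))

theorem abs_sub_taylor_two_le {φ w θ : ℝ → ℝ} {a ε t : ℝ}
    (hφ : ∀ τ ∈ uIcc 0 t, HasDerivAt φ (w τ) τ)
    (hw : ∀ τ ∈ uIcc 0 t, HasDerivAt w (θ τ) τ)
    (hθ : ∀ τ ∈ uIcc 0 t, |θ τ - a| ≤ ε) :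
    |φ t - φ 0 - t * w 0 - a * t ^ 2 / 2| ≤ ε * t ^ 2 := by
  have h0 : (0 : ℝ) ∈ uIcc 0 t := left_mem_uIcc
  have hw_lin : ∀ τ ∈ uIcc 0 t, |w τ - w 0 - a * τ| ≤ ε * |t| := by
    intro τ hτ
    have hmv := (convex_uIcc 0 t).norm_image_sub_le_of_norm_hasDerivWithin_le
      (f := fun σ => w σ - a * σ) (f' := fun σ => θ σ - a)
      (fun σ hσ => by
        simpa using ((hw σ hσ).fun_sub ((hasDerivAt_id' σ).const_mul a)).hasDerivWithinAt)
      hθ h0 hτ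
    have hε : 0 ≤ ε := (abs_nonneg _).trans (hθ 0 h0)
    simp only [Real.norm_eq_abs, mul_zero, sub_zero] at hmv
    calc |w τ - w 0 - a * τ| = |w τ - a * τ - w 0| := by ring_nf
      _ ≤ ε * |τ| := hmv
      _ ≤ ε * |t| := mul_le_mul_of_nonneg_left (by simpa using abs_sub_left_of_mem_uIcc hτ) hε
  have hmv := (convex_uIcc 0 t).norm_image_sub_le_of_norm_hasDerivWithin_le
    (f := fun σ => φ σ - σ * w 0 - a * σ ^ 2 / 2) (f' := fun σ => w σ - w 0 - a * σ)
    (fun σ hσ => by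
      have := (((hφ σ hσ).fun_sub ((hasDerivAt_id' σ).mul_const (w 0))).fun_sub
        (((hasDerivAt_pow 2 σ).const_mul a).div_const 2)).hasDerivWithinAt (s := uIcc 0 t)
      convert this using 1
      norm_num
      ring)
    hw_lin h0 right_mem_uIcc
  simp only [Real.norm_eq_abs, sub_zero] at hmv
  calc |φ t - φ 0 - t * w 0 - a * t ^ 2 / 2|
      = |φ t - t * w 0 - a * t ^ 2 / 2 - (φ 0 - 0 * w 0 - a * 0 ^ 2 / 2)| := by ring_nf
    _ ≤ ε * |t| * |t| := hmv
    _ = ε * t ^ 2 := by rw [mul_assoc, abs_mul_abs_self, sq]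

theorem eventually_abs_sub_taylor_two_le {φ w θ : ℝ → ℝ → ℝ} {a ε : ℝ} (hε : 0 < ε)
    (hderiv : ∀ᶠ p : ℝ × ℝ in 𝓝 0,
      HasDerivAt (φ · p.2) (w p.1 p.2) p.1 ∧ HasDerivAt (w · p.2) (θ p.1 p.2) p.1)
    (hθ : Tendsto (fun p : ℝ × ℝ => θ p.1 p.2) (𝓝 0) (𝓝 a)) :
    ∀ᶠ p : ℝ × ℝ in 𝓝 0,
      |φ p.1 p.2 - φ 0 p.2 - p.1 * w 0 p.2 - a * p.1 ^ 2 / 2| ≤ ε * p.1 ^ 2 := by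
  have hclose : ∀ᶠ p : ℝ × ℝ in 𝓝 0, |θ p.1 p.2 - a| ≤ ε :=
    hθ.eventually (Metric.closedBall_mem_nhds a hε)
  obtain ⟨r, hr, hball⟩ := Metric.eventually_nhds_iff.mp (hderiv.and hclose)
  filter_upwards [Metric.ball_mem_nhds 0 hr] with p hp
  have hseg : ∀ τ ∈ uIcc 0 p.1, dist (τ, p.2) 0 < r := by
    intro τ hτ
    refine lt_of_le_of_lt ?_ hp
    simp only [Prod.dist_eq, Prod.fst_zero, Prod.snd_zero, Real.dist_eq, sub_zero]
    exact max_le_max (by simpa using abs_sub_left_of_mem_uIcc hτ) le_rfl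
  exact abs_sub_taylor_two_le (φ := (φ · p.2)) (w := (w · p.2)) (θ := (θ · p.2))
    (fun τ hτ => (hball (hseg τ hτ)).1.1)
    (fun τ hτ => (hball (hseg τ hτ)).1.2) (fun τ hτ => (hball (hseg τ hτ)).2)

theorem eventually_abs_flow_sub_taylor_two_le {f g ξ ζ : ℝ → ℝ → ℝ}
    (hf : ContDiffAt ℝ 1 (fun p : ℝ × ℝ => f p.1 p.2) 0)
    (hg : ContinuousAt (fun p : ℝ × ℝ => g p.1 p.2) 0)
    (hξ : ContinuousAt (fun p : ℝ × ℝ => ξ p.1 p.2) 0)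
    (hζ : ContinuousAt (fun p : ℝ × ℝ => ζ p.1 p.2) 0)
    (hode : ∀ᶠ p : ℝ × ℝ in 𝓝 0,
      HasDerivAt (ξ · p.2) (f (ξ p.1 p.2) (ζ p.1 p.2)) p.1 ∧
      HasDerivAt (ζ · p.2) (g (ξ p.1 p.2) (ζ p.1 p.2)) p.1)
    (hinit : ∀ y, ξ 0 y = 0 ∧ ζ 0 y = y) {ε : ℝ} (hε : 0 < ε) :
    ∀ᶠ p : ℝ × ℝ in 𝓝 0, |ξ p.1 p.2 - p.1 * f 0 p.2 -
      fderiv ℝ (fun p : ℝ × ℝ => f p.1 p.2) 0 (f 0 0, g 0 0) * p.1 ^ 2 / 2| ≤ ε * p.1 ^ 2 := by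
  set F := fun p : ℝ × ℝ => f p.1 p.2
  set Z := fun p : ℝ × ℝ => (ξ p.1 p.2, ζ p.1 p.2)
  set θ := fun t y => fderiv ℝ F (ξ t y, ζ t y) (f (ξ t y) (ζ t y), g (ξ t y) (ζ t y))
  have hZ0 : Z 0 = 0 := by simp [Z, (hinit 0).1, (hinit 0).2]
  have hZ : ContinuousAt Z 0 := hξ.prodMk hζ
  have hderiv : ∀ᶠ p : ℝ × ℝ in 𝓝 0,
      HasDerivAt (ξ · p.2) (f (ξ p.1 p.2) (ζ p.1 p.2)) p.1 ∧
      HasDerivAt (fun t => f (ξ t p.2) (ζ t p.2)) (θ p.1 p.2) p.1 := by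
    filter_upwards [hode, (hZ0 ▸ hZ.tendsto).eventually (hf.eventually (by simp))]
      with p hp hFp
    exact ⟨hp.1, (hFp.differentiableAt one_ne_zero).hasFDerivAt.comp_hasDerivAt (l := F) p.1
      (hp.1.prodMk hp.2)⟩
  have hθ : ContinuousAt (fun p : ℝ × ℝ => θ p.1 p.2) 0 :=
    ((hf.continuousAt_fderiv one_ne_zero).comp_of_eq hZ hZ0).clm_apply
      ((hf.continuousAt.comp_of_eq hZ hZ0).prodMk (hg.comp_of_eq hZ hZ0))
  have hθ0 : θ 0 0 = fderiv ℝ F 0 (f 0 0, g 0 0) := by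
    simp [θ, (hinit 0).1, (hinit 0).2, ← Prod.zero_eq_mk]
  simpa [hinit] using eventually_abs_sub_taylor_two_le (w := fun t y => f (ξ t y) (ζ t y)) hε
    hderiv (hθ0 ▸ hθ.tendsto)

theorem add_div_two_mul_eq_zero_of_return {φ : ℝ → ℝ → ℝ} {w s : ℝ → ℝ} {a b s' : ℝ}
    (htaylor : ∀ ε > 0, ∀ᶠ p : ℝ × ℝ in 𝓝 0,
      |φ p.1 p.2 - p.1 * w p.2 - a * p.1 ^ 2 / 2| ≤ ε * p.1 ^ 2)
    (hw : HasDerivAt w b 0) (hw0 : w 0 = 0) (hs : HasDerivAt s s' 0) (hs0 : s 0 = 0)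
    (hret : ∀ᶠ y in 𝓝[≠] 0, s y ≠ 0 ∧ φ (s y) y = 0) :
    b + a / 2 * s' = 0 := by
  set h : ℝ → ℝ := fun y => w y + a / 2 * s y
  have hh : HasDerivAt h (b + a / 2 * s') 0 := hw.fun_add (hs.const_mul (a / 2))
  have hs_curve : Tendsto (fun y => (s y, y)) (𝓝 0) (𝓝 0) := by
    have := (hs.continuousAt.prodMk continuousAt_id).tendsto
    rw [hs0] at this
    exact this
  -- `φ (s y) y = 0` with `s y ≠ 0` turns the Taylor bound at `(s y, y)` into `|h y| ≤ ε |s y|`.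
  have hlittle_s : h =o[𝓝 0] s := by
    refine Asymptotics.isLittleO_iff.mpr fun c hc => ?_
    filter_upwards [hs_curve.eventually (htaylor c hc), eventually_nhdsWithin_iff.mp hret]
      with y hy hyret
    rcases eq_or_ne y 0 with rfl | hy0
    · simp [h, hw0, hs0]
    obtain ⟨hsy, hφ⟩ := hyret hy0
    have hfac : φ (s y) y - s y * w y - a * s y ^ 2 / 2 = -(s y * h y) := by rw [hφ]; ring
    rw [hfac, abs_neg, abs_mul, sq, ← abs_mul_abs_self (s y), ← mul_assoc, mul_comm c] at hy
    rw [Real.norm_eq_abs, Real.norm_eq_abs]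
    exact le_of_mul_le_mul_left (by linarith) (abs_pos.mpr hsy)
  have hlittle : h =o[𝓝 0] fun y => y := by
    have hbig : s =O[𝓝 0] fun y => y := by simpa [hs0] using hs.isBigO_sub
    exact hlittle_s.trans_isBigO hbig
  have hh0 : HasDerivAt h 0 0 :=
    hasDerivAt_iff_isLittleO.mpr (by simpa [h, hw0, hs0] using hlittle)
  exact hh.unique hh0

theorem hasDerivAt_neg_one_of_return {f g ξ ζ : ℝ → ℝ → ℝ} {s : ℝ → ℝ}
    (hf : ContDiffAt ℝ 1 (fun p : ℝ × ℝ => f p.1 p.2) 0)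
    (hg : ContinuousAt (fun p : ℝ × ℝ => g p.1 p.2) 0)
    (hξ : ContinuousAt (fun p : ℝ × ℝ => ξ p.1 p.2) 0)
    (hζ : DifferentiableAt ℝ (fun p : ℝ × ℝ => ζ p.1 p.2) 0)
    (hode : ∀ᶠ p : ℝ × ℝ in 𝓝 0,
      HasDerivAt (ξ · p.2) (f (ξ p.1 p.2) (ζ p.1 p.2)) p.1 ∧
      HasDerivAt (ζ · p.2) (g (ξ p.1 p.2) (ζ p.1 p.2)) p.1)
    (hinit : ∀ y, ξ 0 y = 0 ∧ ζ 0 y = y) (hf0 : f 0 0 = 0) (hfy : pdy f 0 0 ≠ 0)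
    (hs : DifferentiableAt ℝ s 0) (hs0 : s 0 = 0)
    (hret : ∀ᶠ y in 𝓝[≠] 0, s y ≠ 0 ∧ ξ (s y) y = 0) :
    HasDerivAt (fun y => ζ (s y) y) (-1) 0 := by
  have hfy_fderiv := hasDerivAt_fderiv_apply_zero_one (a := 0) (b := 0)
    (hf.differentiableAt one_ne_zero)
  have hpdy : HasDerivAt (f 0) (pdy f 0 0) 0 := hasDerivAt_deriv_iff.mpr hfy_fderiv.differentiableAt
  have ha : fderiv ℝ (fun p : ℝ × ℝ => f p.1 p.2) 0 (f 0 0, g 0 0) = g 0 0 * pdy f 0 0 := by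
    rw [apply_pair_eq, hf0, zero_mul, zero_add, hpdy.unique hfy_fderiv]
    rfl
  have hkey := add_div_two_mul_eq_zero_of_return
    (fun ε hε => eventually_abs_flow_sub_taylor_two_le hf hg hξ hζ.continuousAt hode hinit hε)
    hpdy hf0 hs.hasDerivAt hs0 hret
  have hgs : g 0 0 * deriv s 0 = -2 := by
    rw [ha] at hkey
    have hprod : pdy f 0 0 * (2 + g 0 0 * deriv s 0) = 0 := by linear_combination 2 * hkey
    linarith [(mul_eq_zero.mp hprod).resolve_left hfy]
  set L := fderiv ℝ (fun p : ℝ × ℝ => ζ p.1 p.2) 0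
  have hL10 : L (1, 0) = g 0 0 := by
    refine (hasDerivAt_fderiv_apply_one_zero (a := 0) (b := 0) hζ).unique ?_
    simpa [hinit] using hode.self_of_nhds.2
  have hL01 : L (0, 1) = 1 := by
    refine (hasDerivAt_fderiv_apply_zero_one (a := 0) (b := 0) hζ).unique ?_
    have hζ0 : ζ 0 = id := funext fun y => (hinit y).2
    rw [hζ0]
    exact hasDerivAt_id 0
  have hcomp := hζ.hasFDerivAt.comp_hasDerivAt_of_eq 0
    (hs.hasDerivAt.prodMk (hasDerivAt_id' 0)) (by rw [hs0]; rfl)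
  rwa [apply_pair_eq, hL10, hL01, mul_one, mul_comm, hgs, show (-2 : ℝ) + 1 = -1 by norm_num]
    at hcomp

theorem eventually_abs_add_le_of_hasDerivAt {F : ℝ → ℝ → ℝ}
    (hF : DifferentiableAt ℝ (fun p : ℝ × ℝ => F p.1 p.2) 0) (hF0 : F 0 0 = 0)
    (hFy : HasDerivAt (F 0) (-1) 0) (m : ℝ) {ε : ℝ} (hε : 0 < ε) :
    ∀ᶠ y in 𝓝 0, ∀ x, |x| ≤ m * |y| ^ 3 → |F x y + y| ≤ ε * |y| := by
  set L := fderiv ℝ (fun p : ℝ × ℝ => F p.1 p.2) 0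
  have hL01 : L (0, 1) = -1 := (hasDerivAt_fderiv_apply_zero_one (a := 0) (b := 0) hF).unique hFy
  have hL : ∀ x y, L (x, y) = x * L (1, 0) - y := fun x y => by
    rw [apply_pair_eq, hL01]
    ring
  have hlin : ∀ᶠ p : ℝ × ℝ in 𝓝 0, |F p.1 p.2 - L p| ≤ ε / 2 * ‖p‖ := by
    simpa [hF0] using hF.hasFDerivAt.isLittleO.def (half_pos hε)
  obtain ⟨r, hr, hball⟩ := Metric.eventually_nhds_iff.mp hlin
  have hy2 : Tendsto (fun y : ℝ => |m| * y ^ 2) (𝓝 0) (𝓝 0) := by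
    simpa using ((continuous_pow 2).tendsto (0 : ℝ)).const_mul |m|
  filter_upwards [hy2.eventually_lt_const one_pos,
    (hy2.const_mul |L (1, 0)|).eventually_lt_const (by rw [mul_zero]; exact half_pos hε),
    Metric.ball_mem_nhds (0 : ℝ) hr] with y hy_one hy_eps hy_r x hx
  have hmx : |x| ≤ |m| * y ^ 2 * |y| := by
    calc |x| ≤ m * |y| ^ 3 := hx
      _ ≤ |m| * |y| ^ 3 := by gcongr; exact le_abs_self m
      _ = |m| * y ^ 2 * |y| := by rw [pow_succ, sq_abs]; ring
  have hxy : |x| ≤ |y| := by nlinarith [abs_nonneg y]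
  have hnorm : ‖((x, y) : ℝ × ℝ)‖ = |y| := by
    rw [Prod.norm_def, Real.norm_eq_abs, Real.norm_eq_abs, max_eq_right hxy]
  have hp := hball (show dist ((x, y) : ℝ × ℝ) 0 < r by
    rw [dist_zero_right, hnorm]; simpa using hy_r)
  rw [hnorm, hL] at hp
  calc |F x y + y| = |(F x y - (x * L (1, 0) - y)) + L (1, 0) * x| := by ring_nf
    _ ≤ ε / 2 * |y| + |L (1, 0)| * (|m| * y ^ 2 * |y|) := by
      refine (abs_add_le _ _).trans (add_le_add hp ?_)
      rw [abs_mul]; gcongr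
    _ ≤ ε / 2 * |y| + ε / 2 * |y| := by
      have := mul_le_mul_of_nonneg_right hy_eps.le (abs_nonneg y)
      rw [mul_assoc] at this
      linarith
    _ = ε * |y| := by ring

theorem cbrt_nonneg {s : ℝ} (hs : 0 ≤ s) : 0 ≤ cbrt s := Real.rpow_nonneg hs _

theorem cbrt_pow_three {s : ℝ} (hs : 0 ≤ s) : cbrt s ^ 3 = s := by
  rw [cbrt, ← Real.rpow_natCast, ← Real.rpow_mul hs]
  norm_num

theorem neg_mem_Icc_of_abs_add_le {p y c δ ε : ℝ} (hε0 : 0 ≤ ε) (hε1 : ε ≤ 1) (hc : 0 ≤ c)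
    (hy : y ∈ Icc c δ) (h : |p + y| ≤ ε * |y|) :
    p ∈ Icc (-((1 + ε) * δ)) (-((1 - ε) * c)) := by
  obtain ⟨hcy, hyδ⟩ := hy
  rw [abs_of_nonneg (hc.trans hcy), abs_le] at h
  constructor <;> nlinarith

theorem exists_forall_mem_Icc_of_eventually {P : ℝ → ℝ → ℝ} {m ε : ℝ} (hm : 0 < m)
    (hε0 : 0 ≤ ε) (hε1 : ε ≤ 1)
    (h : ∀ᶠ y in 𝓝 0, ∀ x, |x| ≤ m * |y| ^ 3 → |P x y + y| ≤ ε * |y|) :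
    ∃ δ > (0 : ℝ), ∀ x : ℝ, |x| ≤ m * δ ^ 3 →
      (∀ y ∈ Icc (cbrt (|x| / m)) δ,
        P x y ∈ Icc (-((1 + ε) * δ)) (-((1 - ε) * cbrt (|x| / m)))) ∧
      (∀ y ∈ Icc (-δ) (-(cbrt (|x| / m))),
        P x y ∈ Icc ((1 - ε) * cbrt (|x| / m)) ((1 + ε) * δ)) := by
  obtain ⟨r, hr, hball⟩ := Metric.eventually_nhds_iff.mp h
  refine ⟨r / 2, half_pos hr, fun x _ => ?_⟩
  set c := cbrt (|x| / m)
  have hc : 0 ≤ c := cbrt_nonneg (by positivity)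
  have hest : ∀ y, c ≤ |y| → |y| ≤ r / 2 → |P x y + y| ≤ ε * |y| := by
    intro y hcy hyr
    refine hball (by rw [Real.dist_eq, sub_zero]; linarith) x ?_
    calc |x| = m * c ^ 3 := by rw [cbrt_pow_three (by positivity)]; field_simp
      _ ≤ m * |y| ^ 3 := by gcongr
  constructor
  · intro y hy
    refine neg_mem_Icc_of_abs_add_le hε0 hε1 hc hy (hest y ?_ ?_)
    · exact hy.1.trans (le_abs_self y)
    · exact abs_le.mpr ⟨by linarith [hy.1], hy.2⟩
  · intro y hy
    have hy' : -y ∈ Icc c (r / 2) := neg_mem_Icc_iff.mpr hy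
    have hPy : |-P x y + -y| ≤ ε * |-y| := by
      rw [← neg_add, abs_neg, abs_neg]
      refine hest y ?_ ?_
      · simpa using hy'.1.trans (le_abs_self (-y))
      · exact abs_le.mpr ⟨hy.1, by linarith [hy.2]⟩
    simpa [and_comm] using neg_mem_Icc_of_abs_add_le hε0 hε1 hc hy' hPy

theorem stmt_7_general
    (f g : ℝ → ℝ → ℝ) (X Y : ℝ → ℝ → ℝ → ℝ)
    (U : Set (ℝ × ℝ)) (hU : U ∈ nhds ((0 : ℝ), (0 : ℝ)))
    (hf : ContDiffOn ℝ 4 (fun p : ℝ × ℝ => f p.1 p.2) U)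
    (hg : ContDiffOn ℝ 4 (fun p : ℝ × ℝ => g p.1 p.2) U)
    (V : Set (ℝ × ℝ × ℝ)) (hV : V ∈ nhds (((0 : ℝ), (0 : ℝ), (0 : ℝ)) : ℝ × ℝ × ℝ))
    (hX : ContDiffOn ℝ 4 (fun p : ℝ × ℝ × ℝ => X p.1 p.2.1 p.2.2) V)
    (hY : ContDiffOn ℝ 4 (fun p : ℝ × ℝ × ℝ => Y p.1 p.2.1 p.2.2) V)
    (hode : ∀ t x y : ℝ, (t, x, y) ∈ V →
      HasDerivAt (fun s => X s x y) (f (X t x y) (Y t x y)) t ∧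
      HasDerivAt (fun s => Y s x y) (g (X t x y) (Y t x y)) t)
    (hinit : ∀ x y : ℝ, X 0 x y = x ∧ Y 0 x y = y)
    (hf0 : f 0 0 = 0)
    (hfg0 : pdy f 0 0 * g 0 0 ≠ 0)
    -- the data provided by Lemma 2.1 (the fold curve `u` and the return time `T`)
    (δ₁ : ℝ) (hδ₁ : 0 < δ₁) (u : ℝ → ℝ)
    (hu0 : Tendsto u (nhds 0) (nhds 0))
    (T : ℝ → ℝ → ℝ)
    (hTC2 : ContDiffOn ℝ 2 (fun p : ℝ × ℝ => T p.1 p.2) (Icc (-δ₁) δ₁ ×ˢ Icc (-δ₁) δ₁))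
    (hT0 : ∀ x, |x| ≤ δ₁ → T x (u x) = 0)
    (η : ℝ)
    (hT : ∀ x y, |x| ≤ δ₁ → |y| ≤ δ₁ → y ≠ u x →
      T x y ≠ 0 ∧ X (T x y) x y = x ∧ |T x y| < η ∧
      ∀ t, t ≠ 0 → |t| < η → X t x y = x → t = T x y)
    (P : ℝ → ℝ → ℝ) (hP : ∀ x y, P x y = Y (T x y) x y) :
    ∀ m : ℝ, 0 < m → ∀ ε : ℝ, 0 < ε → ε < 1 →
      ∃ δ > (0 : ℝ), ∀ x : ℝ, |x| ≤ m * δ ^ 3 →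
        (∀ y ∈ Icc (cbrt (|x| / m)) δ,
          P x y ∈ Icc (-((1 + ε) * δ)) (-((1 - ε) * cbrt (|x| / m)))) ∧
        (∀ y ∈ Icc (-δ) (-(cbrt (|x| / m))),
          P x y ∈ Icc ((1 - ε) * cbrt (|x| / m)) ((1 + ε) * δ)) := by
  obtain rfl : P = fun x y => Y (T x y) x y := funext₂ hP
  intro m hm ε hε hε1
  have hu00 : u 0 = 0 := eq_of_tendsto_nhds hu0
  have hT00 : T 0 0 = 0 := by simpa [hu00] using hT0 0 (by simpa using hδ₁.le)
  have hTd : DifferentiableAt ℝ (fun p : ℝ × ℝ => T p.1 p.2) (0, 0) :=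
    (hTC2.contDiffAt (prod_mem_nhds (Icc_mem_nhds (by linarith) hδ₁)
      (Icc_mem_nhds (by linarith) hδ₁))).differentiableAt two_ne_zero
  have hYd := (hY.contDiffAt hV).differentiableAt (by norm_num)
  have hslice : Tendsto (fun p : ℝ × ℝ => ((p.1, 0, p.2) : ℝ × ℝ × ℝ)) (𝓝 0) (𝓝 (0, 0, 0)) :=
    (by fun_prop : Continuous fun p : ℝ × ℝ => ((p.1, (0 : ℝ), p.2) : ℝ × ℝ × ℝ)).tendsto' _ _ rfl
  have hret : ∀ᶠ y in 𝓝[≠] (0 : ℝ), T 0 y ≠ 0 ∧ X (T 0 y) 0 y = 0 := by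
    filter_upwards [mem_nhdsWithin_of_mem_nhds (Icc_mem_nhds (neg_neg_iff_pos.mpr hδ₁) hδ₁),
      self_mem_nhdsWithin] with y hy hy0
    obtain ⟨hTy, hXy, -⟩ := hT 0 y (by simpa using hδ₁.le) (abs_le.mpr hy) (by rwa [hu00])
    exact ⟨hTy, hXy⟩
  have hq : HasDerivAt (fun y => Y (T 0 y) 0 y) (-1) 0 :=
    hasDerivAt_neg_one_of_return (ξ := fun t y => X t 0 y) (ζ := fun t y => Y t 0 y)
      ((hf.contDiffAt hU).of_le (by norm_num)) (hg.contDiffAt hU).continuousAt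
      ((hX.contDiffAt hV).continuousAt.tendsto.comp hslice)
      (hYd.comp (0 : ℝ × ℝ) (f := fun p : ℝ × ℝ => ((p.1, 0, p.2) : ℝ × ℝ × ℝ)) (by fun_prop))
      (hslice.eventually_mem hV |>.mono fun p hp => hode p.1 0 p.2 hp)
      (fun y => hinit 0 y) hf0 (left_ne_zero_of_mul hfg0)
      (hTd.comp (0 : ℝ) (by fun_prop)) hT00 hret
  have hPd : DifferentiableAt ℝ (fun p : ℝ × ℝ => Y (T p.1 p.2) p.1 p.2) 0 := by
    have hYd' : DifferentiableAt ℝ (fun q : ℝ × ℝ × ℝ => Y q.1 q.2.1 q.2.2) (T 0 0, 0, 0) := by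
      rwa [hT00]
    exact hYd'.comp (0 : ℝ × ℝ) (f := fun p : ℝ × ℝ => ((T p.1 p.2, p) : ℝ × ℝ × ℝ))
      (hTd.prodMk differentiableAt_id)
  exact exists_forall_mem_Icc_of_eventually hm hε.le hε1.le
    (eventually_abs_add_le_of_hasDerivAt hPd (by simp [hT00, hinit]) hq m hε)

/-- Corollary 2.3, inclusion (2.16): the map `𝒫` transforms the intervals
`[∛(|x|/m), δ]` and `[-δ, -∛(|x|/m)]` as stated, for all `|x| ≤ m δ³`. -/
theorem stmt_7
    (f g : ℝ → ℝ → ℝ) (X Y : ℝ → ℝ → ℝ → ℝ)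
    (U : Set (ℝ × ℝ)) (hU : U ∈ nhds ((0 : ℝ), (0 : ℝ)))
    (hf : ContDiffOn ℝ 4 (fun p : ℝ × ℝ => f p.1 p.2) U)
    (hg : ContDiffOn ℝ 4 (fun p : ℝ × ℝ => g p.1 p.2) U)
    (V : Set (ℝ × ℝ × ℝ)) (hV : V ∈ nhds (((0 : ℝ), (0 : ℝ), (0 : ℝ)) : ℝ × ℝ × ℝ))
    (hX : ContDiffOn ℝ 4 (fun p : ℝ × ℝ × ℝ => X p.1 p.2.1 p.2.2) V)
    (hY : ContDiffOn ℝ 4 (fun p : ℝ × ℝ × ℝ => Y p.1 p.2.1 p.2.2) V)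
    (hode : ∀ t x y : ℝ, (t, x, y) ∈ V →
      HasDerivAt (fun s => X s x y) (f (X t x y) (Y t x y)) t ∧
      HasDerivAt (fun s => Y s x y) (g (X t x y) (Y t x y)) t)
    (hinit : ∀ x y : ℝ, X 0 x y = x ∧ Y 0 x y = y)
    (hf0 : f 0 0 = 0)
    (hfg0 : pdy f 0 0 * g 0 0 ≠ 0)
    -- the data provided by Lemma 2.1 (the fold curve `u` and the return time `T`)
    (δ₁ : ℝ) (hδ₁ : 0 < δ₁) (u : ℝ → ℝ)
    (hu0 : Tendsto u (nhds 0) (nhds 0))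
    (hu : ∀ x, |x| ≤ δ₁ → f x (u x) = 0)
    (T : ℝ → ℝ → ℝ)
    (hTC2 : ContDiffOn ℝ 2 (fun p : ℝ × ℝ => T p.1 p.2) (Icc (-δ₁) δ₁ ×ˢ Icc (-δ₁) δ₁))
    (hT0 : ∀ x, |x| ≤ δ₁ → T x (u x) = 0)
    (η : ℝ) (hη : 0 < η)
    (hT : ∀ x y, |x| ≤ δ₁ → |y| ≤ δ₁ → y ≠ u x →
      T x y ≠ 0 ∧ X (T x y) x y = x ∧ |T x y| < η ∧
      ∀ t, t ≠ 0 → |t| < η → X t x y = x → t = T x y)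
    (P : ℝ → ℝ → ℝ) (hP : ∀ x y, P x y = Y (T x y) x y) :
    ∀ m : ℝ, 0 < m → ∀ ε : ℝ, 0 < ε → ε < 1 →
      ∃ δ > (0 : ℝ), ∀ x : ℝ, |x| ≤ m * δ ^ 3 →
        (∀ y ∈ Icc (cbrt (|x| / m)) δ,
          P x y ∈ Icc (-((1 + ε) * δ)) (-((1 - ε) * cbrt (|x| / m)))) ∧
        (∀ y ∈ Icc (-δ) (-(cbrt (|x| / m))),
          P x y ∈ Icc ((1 - ε) * cbrt (|x| / m)) ((1 + ε) * δ)) :=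
  stmt_7_general f g X Y U hU hf hg V hV hX hY hode hinit hf0 hfg0 δ₁ hδ₁ u hu0 T hTC2 hT0 η hT P hP
end

section
/- Assume f(0) = 0 and f'_y(0)·g(0) ≠ 0. Let 𝒫(x,y) = −y + α·y² + ℛ(x,y) and 𝒫̃(x,y) = y + β·x/y + ℛ̃(x,y) be the maps provided by Lemmas 2.1 and 2.2, with α = 2·(f'_x(0) + g'_y(0))/g(0) + f''_yy(0)/f'_y(0) and β = −2·g(0)/f'_y(0). Define r(x,y) := 𝒫̃(x, 𝒫(x,y)) − (−y + α·y² − β·x/y). Then for any m > 0 the function r is C² on the region {(x,y) : 0 < ∛(|x|/m) < |y|} near the origin, and r(x,y) → 0, r'_y(x,y)/y → 0, and r'_x(x,y)·y → 0, all as |x| ≤ m|y|³, y → 0; that is, 𝒫̃(𝒫(y)) = −y + α·y² − β·x/y + r(x,y) with remainder r satisfying these three limiting relations. -/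
/-!
Write `P = -y + S` with `S = α y² + R`. Since `1/P + 1/y = S/(P y)`, the remainder of the
composition is `r = R + β x S / (P y) + R̃(x, P)`. Along the cusp `|x| ≤ m |y|³` we have
`x / y² → 0`, `S / y² → α` and `P / y → -1`; in particular `|y| ≤ 2 |P|`, so `(x, P)` runs along
the cusp `|x| ≤ 8 m |P|³`, where the estimates on `R̃` apply. After the chain rule, `r`, `r'_y / y`
and `r'_x · y` become algebraic combinations of these limits.
-/
open Set Filter Topology

/-- Partial derivative in the first variable. -/
noncomputable def pdx (f : ℝ → ℝ → ℝ) (a b : ℝ) : ℝ := deriv (fun x => f x b) a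

/-- Second partial derivative in the second variable. -/
noncomputable def pdyy (f : ℝ → ℝ → ℝ) (a b : ℝ) : ℝ := iteratedDeriv 2 (fun y => f a y) b

section Cusp

/-- `h → L as |x| ≤ m|y|³, y → 0` is `Tendsto h (cusp m) (𝓝 L)`. -/
def cusp (m : ℝ) : Filter (ℝ × ℝ) :=
  comap Prod.snd (𝓝[≠] 0) ⊓ 𝓟 {p | |p.1| ≤ m * |p.2| ^ 3}

def cuspRegion (m δ : ℝ) : Set (ℝ × ℝ) :=
  {p | (|p.1| / m) ^ ((1 : ℝ) / 3) < |p.2| ∧ |p.2| < δ}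

theorem eventually_cusp_iff {m : ℝ} {Q : ℝ × ℝ → Prop} :
    (∀ᶠ p in cusp m, Q p) ↔
      ∃ δ > 0, ∀ x y : ℝ, 0 < |y| → |y| ≤ δ → |x| ≤ m * |y| ^ 3 → Q (x, y) := by
  rw [cusp, (((nhdsWithin_hasBasis Metric.nhds_basis_closedBall _).comap Prod.snd).inf_principal
    _).eventually_iff]
  simp only [Prod.forall, mem_inter_iff, mem_preimage, Metric.mem_closedBall, dist_zero_right,
    Real.norm_eq_abs, mem_compl_singleton_iff, mem_ofPred_eq, ← abs_pos]
  grind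

theorem tendsto₃_cusp_zero_iff {m : ℝ} {a b c : ℝ → ℝ → ℝ} :
    (∀ ε > 0, ∃ δ > 0, ∀ x y : ℝ, 0 < |y| → |y| ≤ δ → |x| ≤ m * |y| ^ 3 →
      |a x y| ≤ ε ∧ |b x y| ≤ ε ∧ |c x y| ≤ ε) ↔
    Tendsto (fun p : ℝ × ℝ => a p.1 p.2) (cusp m) (𝓝 0) ∧
      Tendsto (fun p : ℝ × ℝ => b p.1 p.2) (cusp m) (𝓝 0) ∧
      Tendsto (fun p : ℝ × ℝ => c p.1 p.2) (cusp m) (𝓝 0) := by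
  rw [Metric.nhds_basis_closedBall.tendsto_right_iff,
    Metric.nhds_basis_closedBall.tendsto_right_iff,
    Metric.nhds_basis_closedBall.tendsto_right_iff, ← forall_and, ← forall_and]
  simp only [← imp_and, ← eventually_and]
  simp only [eventually_cusp_iff, Metric.mem_closedBall, dist_zero_right, Real.norm_eq_abs]

theorem tendsto_snd_cusp (m : ℝ) : Tendsto Prod.snd (cusp m) (𝓝[≠] 0) :=
  tendsto_comap.mono_left inf_le_left

theorem eventually_abs_fst_le_cusp (m : ℝ) : ∀ᶠ p in cusp m, |p.1| ≤ m * |p.2| ^ 3 :=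
  mem_inf_of_right (mem_principal_self _)

theorem eventually_snd_ne_zero_cusp (m : ℝ) : ∀ᶠ p in cusp m, p.2 ≠ 0 :=
  (tendsto_snd_cusp m).eventually self_mem_nhdsWithin

theorem tendsto_fst_div_sq_cusp (m : ℝ) :
    Tendsto (fun p : ℝ × ℝ => p.1 / p.2 ^ 2) (cusp m) (𝓝 0) := by
  have hy : Tendsto (fun p : ℝ × ℝ => m * |p.2|) (cusp m) (𝓝 0) := by
    simpa using ((tendsto_snd_cusp m).mono_right nhdsWithin_le_nhds).abs.const_mul m
  refine squeeze_zero_norm' ?_ hy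
  filter_upwards [eventually_abs_fst_le_cusp m, eventually_snd_ne_zero_cusp m] with p hp hy0
  rw [Real.norm_eq_abs, abs_div, abs_pow, div_le_iff₀ (by positivity)]
  linarith

theorem tendsto_prodMk_cusp_of_abs_le {m k : ℝ} {φ : ℝ × ℝ → ℝ}
    (hφ : Tendsto φ (cusp m) (𝓝 0)) (hk : ∀ᶠ p in cusp m, |p.2| ≤ k * |φ p|) :
    Tendsto (fun p => (p.1, φ p)) (cusp m) (cusp (k ^ 3 * m)) := by
  have hx := eventually_abs_fst_le_cusp m
  have hy := eventually_snd_ne_zero_cusp m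
  refine tendsto_inf.2 ⟨tendsto_comap_iff.2 (tendsto_nhdsWithin_iff.2 ⟨hφ, ?_⟩),
    tendsto_principal.2 ?_⟩
  · filter_upwards [hk, hy] with p hk hy hφ0
    simp_all
  · filter_upwards [hk, hx, hy] with p hk hx hy
    have hm : 0 ≤ m := by
      by_contra! hm
      nlinarith [abs_nonneg p.1, pow_pos (abs_pos.2 hy) 3]
    calc |p.1| ≤ m * |p.2| ^ 3 := hx
      _ ≤ m * (k * |φ p|) ^ 3 := by gcongr
      _ = k ^ 3 * m * |φ p| ^ 3 := by ring

theorem mem_cuspRegion_iff {m δ : ℝ} (hm : 0 < m) {p : ℝ × ℝ} :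
    p ∈ cuspRegion m δ ↔ |p.1| < m * |p.2| ^ 3 ∧ |p.2| < δ := by
  rw [cuspRegion, mem_ofPred_eq, one_div, Real.rpow_inv_lt_iff_of_pos (by positivity)
    (abs_nonneg _) (by norm_num), div_lt_iff₀' hm]
  norm_cast

theorem isOpen_cuspRegion (m δ : ℝ) : IsOpen (cuspRegion m δ) :=
  (isOpen_lt (by fun_prop (disch := norm_num)) (by fun_prop)).and
    (isOpen_lt (by fun_prop) (by fun_prop))

theorem eventually_mem_cuspRegion {m m' δ : ℝ} (hm : 0 < m) (hmm' : m < m') (hδ : 0 < δ) :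
    ∀ᶠ p in cusp m, p ∈ cuspRegion m' δ := by
  refine eventually_cusp_iff.2 ⟨δ / 2, by positivity, fun x y hy hyδ hx => ?_⟩
  rw [mem_cuspRegion_iff (hm.trans hmm')]
  constructor
  · calc |x| ≤ m * |y| ^ 3 := hx
      _ < m' * |y| ^ 3 := by gcongr
  · linarith

theorem abs_snd_pos_of_mem_cuspRegion {m δ : ℝ} (hm : 0 < m) {p : ℝ × ℝ}
    (hp : p ∈ cuspRegion m δ) : 0 < |p.2| :=
  (Real.rpow_nonneg (by positivity) _).trans_lt hp.1

theorem exists_cuspRegion_subset {m : ℝ} {s : Set (ℝ × ℝ)} (hm : 0 < m)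
    (hs : ∀ᶠ p in cusp m, p ∈ s) : ∃ δ > 0, cuspRegion m δ ⊆ s := by
  obtain ⟨δ, hδ, h⟩ := eventually_cusp_iff.1 hs
  refine ⟨δ, hδ, fun p hp => ?_⟩
  have hy := abs_snd_pos_of_mem_cuspRegion hm hp
  rw [mem_cuspRegion_iff hm] at hp
  exact h p.1 p.2 hy hp.2.le hp.1.le

theorem ContDiffOn.eventually_differentiableAt_cusp {f : ℝ × ℝ → ℝ} {n : WithTop ℕ∞}
    {m δ : ℝ} (hf : ContDiffOn ℝ n f (cuspRegion (2 * m) δ)) (hn : n ≠ 0) (hm : 0 < m)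
    (hδ : 0 < δ) : ∀ᶠ p in cusp m, DifferentiableAt ℝ f p := by
  filter_upwards [eventually_mem_cuspRegion hm (by linarith : m < 2 * m) hδ] with p hp
  exact (hf.contDiffAt ((isOpen_cuspRegion _ _).mem_nhds hp)).differentiableAt hn

end Cusp

section Partial

variable {F : ℝ → ℝ → ℝ} {a b : ℝ}

theorem pdx_eq_fderiv (hF : DifferentiableAt ℝ (fun p : ℝ × ℝ => F p.1 p.2) (a, b)) :
    pdx F a b = fderiv ℝ (fun p : ℝ × ℝ => F p.1 p.2) (a, b) (1, 0) := by
  have h := hF.hasFDerivAt.comp_hasDerivAt a ((hasDerivAt_id' a).prodMk (hasDerivAt_const a b))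
  exact h.deriv

theorem pdy_eq_fderiv (hF : DifferentiableAt ℝ (fun p : ℝ × ℝ => F p.1 p.2) (a, b)) :
    pdy F a b = fderiv ℝ (fun p : ℝ × ℝ => F p.1 p.2) (a, b) (0, 1) := by
  have h := hF.hasFDerivAt.comp_hasDerivAt b ((hasDerivAt_const b a).prodMk (hasDerivAt_id' b))
  exact h.deriv

theorem DifferentiableAt.hasDerivAt_comp₂ {u v : ℝ → ℝ} {t u' v' : ℝ}
    (hF : DifferentiableAt ℝ (fun p : ℝ × ℝ => F p.1 p.2) (u t, v t))
    (hu : HasDerivAt u u' t) (hv : HasDerivAt v v' t) :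
    HasDerivAt (fun s => F (u s) (v s)) (u' * pdx F (u t) (v t) + v' * pdy F (u t) (v t)) t := by
  refine (hF.hasFDerivAt.comp_hasDerivAt t (hu.prodMk hv)).congr_deriv ?_
  have huv : ((u', v') : ℝ × ℝ) = u' • (1, 0) + v' • (0, 1) := by simp
  rw [pdx_eq_fderiv hF, pdy_eq_fderiv hF, huv, map_add, map_smul, map_smul, smul_eq_mul,
    smul_eq_mul]

theorem DifferentiableAt.hasDerivAt_pdx
    (hF : DifferentiableAt ℝ (fun p : ℝ × ℝ => F p.1 p.2) (a, b)) :
    HasDerivAt (fun x => F x b) (pdx F a b) a := by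
  simpa using hF.hasDerivAt_comp₂ (hasDerivAt_id' a) (hasDerivAt_const a b)

theorem DifferentiableAt.hasDerivAt_pdy
    (hF : DifferentiableAt ℝ (fun p : ℝ × ℝ => F p.1 p.2) (a, b)) :
    HasDerivAt (fun y => F a y) (pdy F a b) b := by
  simpa using hF.hasDerivAt_comp₂ (hasDerivAt_const b a) (hasDerivAt_id' b)

end Partial

section Composition

variable {α β : ℝ} {P Pt R Rt r : ℝ → ℝ → ℝ}

theorem remainder_eq (hPt : ∀ x y, y ≠ 0 → Pt x y = y + β * x / y + Rt x y)
    (hr : ∀ x y, r x y = Pt x (P x y) - (-y + α * y ^ 2 - β * x / y)) {x y : ℝ}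
    (hP0 : P x y ≠ 0) :
    r x y = P x y + β * x / P x y + Rt x (P x y) + (y - α * y ^ 2) + β * x / y := by
  rw [hr, hPt _ _ hP0]
  ring

theorem pdy_remainder (hP : ∀ x y, P x y = -y + α * y ^ 2 + R x y)
    (hPt : ∀ x y, y ≠ 0 → Pt x y = y + β * x / y + Rt x y)
    (hr : ∀ x y, r x y = Pt x (P x y) - (-y + α * y ^ 2 - β * x / y)) {x y : ℝ}
    (hR : DifferentiableAt ℝ (fun p : ℝ × ℝ => R p.1 p.2) (x, y))
    (hRt : DifferentiableAt ℝ (fun p : ℝ × ℝ => Rt p.1 p.2) (x, P x y))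
    (hP0 : P x y ≠ 0) (hy : y ≠ 0) :
    pdy r x y = (-1 + 2 * α * y + pdy R x y) * (1 - β * x / P x y ^ 2 + pdy Rt x (P x y))
      + 1 - 2 * α * y - β * x / y ^ 2 := by
  have hPy : HasDerivAt (fun y' => P x y') (-1 + 2 * α * y + pdy R x y) y := by
    simp only [hP]
    exact (((hasDerivAt_id' y).neg.add ((hasDerivAt_pow 2 y).const_mul α)).add
      hR.hasDerivAt_pdy).congr_deriv (by ring)
  have hRtP := hRt.hasDerivAt_comp₂ (hasDerivAt_const y x) hPy
  have hsum := (((hPy.add ((hasDerivAt_const y (β * x)).div hPy hP0)).add hRtP).add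
    ((hasDerivAt_id' y).sub ((hasDerivAt_pow 2 y).const_mul α))).add
    ((hasDerivAt_const y (β * x)).div (hasDerivAt_id' y) hy)
  have heq : (fun y' => r x y') =ᶠ[𝓝 y] fun y' =>
      P x y' + β * x / P x y' + Rt x (P x y') + (y' - α * y' ^ 2) + β * x / y' := by
    filter_upwards [hPy.continuousAt.eventually_ne hP0] with y' hy'
    exact remainder_eq hPt hr hy'
  rw [pdy, (hsum.congr_of_eventuallyEq heq).deriv]
  field_simp
  ring

theorem pdx_remainder (hP : ∀ x y, P x y = -y + α * y ^ 2 + R x y)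
    (hPt : ∀ x y, y ≠ 0 → Pt x y = y + β * x / y + Rt x y)
    (hr : ∀ x y, r x y = Pt x (P x y) - (-y + α * y ^ 2 - β * x / y)) {x y : ℝ}
    (hR : DifferentiableAt ℝ (fun p : ℝ × ℝ => R p.1 p.2) (x, y))
    (hRt : DifferentiableAt ℝ (fun p : ℝ × ℝ => Rt p.1 p.2) (x, P x y))
    (hP0 : P x y ≠ 0) (hy : y ≠ 0) :
    pdx r x y = pdx R x y * (1 - β * x / P x y ^ 2 + pdy Rt x (P x y))
      + β / P x y + pdx Rt x (P x y) + β / y := by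
  have hPx : HasDerivAt (fun x' => P x' y) (pdx R x y) x := by
    simp only [hP]
    simpa using hR.hasDerivAt_pdx.const_add (-y + α * y ^ 2)
  have hRtP := hRt.hasDerivAt_comp₂ (hasDerivAt_id' x) hPx
  have hβx := (hasDerivAt_id' x).const_mul β
  have hsum := (((hPx.add (hβx.div hPx hP0)).add hRtP).add
    (hasDerivAt_const x (y - α * y ^ 2))).add (hβx.div_const y)
  have heq : (fun x' => r x' y) =ᶠ[𝓝 x] fun x' =>
      P x' y + β * x' / P x' y + Rt x' (P x' y) + (y - α * y ^ 2) + β * x' / y := by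
    filter_upwards [hPx.continuousAt.eventually_ne hP0] with x' hx'
    exact remainder_eq hPt hr hx'
  rw [pdx, (hsum.congr_of_eventuallyEq heq).deriv]
  field_simp
  ring

theorem contDiffOn_remainder {n : WithTop ℕ∞} {s t : Set (ℝ × ℝ)}
    (hP : ∀ x y, P x y = -y + α * y ^ 2 + R x y)
    (hPt : ∀ x y, y ≠ 0 → Pt x y = y + β * x / y + Rt x y)
    (hr : ∀ x y, r x y = Pt x (P x y) - (-y + α * y ^ 2 - β * x / y))
    (hR : ContDiffOn ℝ n (fun p : ℝ × ℝ => R p.1 p.2) s)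
    (hRt : ContDiffOn ℝ n (fun p : ℝ × ℝ => Rt p.1 p.2) t)
    (hst : MapsTo (fun p : ℝ × ℝ => (p.1, P p.1 p.2)) s t)
    (hP0 : ∀ p ∈ s, P p.1 p.2 ≠ 0) (hy : ∀ p ∈ s, p.2 ≠ 0) :
    ContDiffOn ℝ n (fun p : ℝ × ℝ => r p.1 p.2) s := by
  have hPs : ContDiffOn ℝ n (fun p : ℝ × ℝ => P p.1 p.2) s := by
    simp only [hP]
    exact (contDiffOn_snd.neg.add (contDiffOn_const.mul (contDiffOn_snd.pow 2))).add hR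
  have hRtP : ContDiffOn ℝ n (fun p : ℝ × ℝ => Rt p.1 (P p.1 p.2)) s :=
    hRt.comp (contDiffOn_fst.prodMk hPs) hst
  have hβx : ContDiffOn ℝ n (fun p : ℝ × ℝ => β * p.1) s := contDiffOn_const.mul contDiffOn_fst
  refine ((((hPs.add (hβx.div hPs hP0)).add hRtP).add
    (contDiffOn_snd.sub (contDiffOn_const.mul (contDiffOn_snd.pow 2)))).add
    (hβx.div contDiffOn_snd hy)).congr fun p hp => remainder_eq hPt hr (hP0 p hp)

variable {m : ℝ}

theorem tendsto_div_snd_of_expansion (hP : ∀ x y, P x y = -y + α * y ^ 2 + R x y)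
    (hR : Tendsto (fun p : ℝ × ℝ => R p.1 p.2 / p.2 ^ 2) (cusp m) (𝓝 0)) :
    Tendsto (fun p : ℝ × ℝ => P p.1 p.2 / p.2) (cusp m) (𝓝 (-1)) := by
  have h := (((tendsto_snd_cusp m).mono_right nhdsWithin_le_nhds).mul (hR.const_add α)).const_add
    (-1 : ℝ)
  rw [zero_mul, add_zero] at h
  refine h.congr' ?_
  filter_upwards [eventually_snd_ne_zero_cusp m] with p hy0
  rw [hP]
  field_simp
  ring

theorem tendsto_prodMk_expansion_cusp (hP : ∀ x y, P x y = -y + α * y ^ 2 + R x y)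
    (hR : Tendsto (fun p : ℝ × ℝ => R p.1 p.2 / p.2 ^ 2) (cusp m) (𝓝 0)) :
    Tendsto (fun p : ℝ × ℝ => (p.1, P p.1 p.2)) (cusp m) (cusp (2 ^ 3 * m)) := by
  have hq := tendsto_div_snd_of_expansion hP hR
  have hy := (tendsto_snd_cusp m).mono_right nhdsWithin_le_nhds
  refine tendsto_prodMk_cusp_of_abs_le ?_ ?_
  · have h := hq.mul hy
    rw [mul_zero] at h
    refine h.congr' ?_
    filter_upwards [eventually_snd_ne_zero_cusp m] with p hy0
    field_simp
  · filter_upwards [hq.abs.eventually (lt_mem_nhds (by norm_num : 1 / 2 < |(-1 : ℝ)|)),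
      eventually_snd_ne_zero_cusp m] with p hq hy0
    rw [abs_div, lt_div_iff₀ (abs_pos.2 hy0)] at hq
    linarith

theorem tendsto_remainder_cusp (hP : ∀ x y, P x y = -y + α * y ^ 2 + R x y)
    (hPt : ∀ x y, y ≠ 0 → Pt x y = y + β * x / y + Rt x y)
    (hr : ∀ x y, r x y = Pt x (P x y) - (-y + α * y ^ 2 - β * x / y))
    (hR : Tendsto (fun p : ℝ × ℝ => R p.1 p.2 / p.2 ^ 2) (cusp m) (𝓝 0))
    (hRt : Tendsto (fun p : ℝ × ℝ => Rt p.1 p.2 / p.2 ^ 2) (cusp (2 ^ 3 * m)) (𝓝 0)) :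
    Tendsto (fun p : ℝ × ℝ => r p.1 p.2) (cusp m) (𝓝 0) := by
  have hy := (tendsto_snd_cusp m).mono_right nhdsWithin_le_nhds
  have hq := tendsto_div_snd_of_expansion hP hR
  have hΦ := tendsto_prodMk_expansion_cusp hP hR
  -- `r = y² (R/y² + β (x/y²) (α + R/y²) / (P/y) + (R̃(x,P)/P²) (P/y)²)`
  have h := (hy.pow 2).mul ((hR.add ((((tendsto_fst_div_sq_cusp m).const_mul β).mul
    (hR.const_add α)).div hq (by norm_num))).add ((hRt.comp hΦ).mul (hq.pow 2)))
  rw [zero_pow two_ne_zero, zero_mul] at h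
  refine h.congr' ?_
  filter_upwards [eventually_snd_ne_zero_cusp m, hΦ.eventually (eventually_snd_ne_zero_cusp _)]
    with ⟨x, y⟩ hy0 hP0
  simp only [Pi.div_apply, Function.comp_apply] at hy0 hP0 ⊢
  rw [remainder_eq hPt hr hP0]
  field_simp
  rw [hP]
  ring

theorem tendsto_pdy_remainder_div_cusp (hP : ∀ x y, P x y = -y + α * y ^ 2 + R x y)
    (hPt : ∀ x y, y ≠ 0 → Pt x y = y + β * x / y + Rt x y)
    (hr : ∀ x y, r x y = Pt x (P x y) - (-y + α * y ^ 2 - β * x / y))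
    (hR : Tendsto (fun p : ℝ × ℝ => R p.1 p.2 / p.2 ^ 2) (cusp m) (𝓝 0))
    (hRy : Tendsto (fun p : ℝ × ℝ => pdy R p.1 p.2 / p.2) (cusp m) (𝓝 0))
    (hRty : Tendsto (fun p : ℝ × ℝ => pdy Rt p.1 p.2 / p.2) (cusp (2 ^ 3 * m)) (𝓝 0))
    (hRd : ∀ᶠ p in cusp m, DifferentiableAt ℝ (fun p : ℝ × ℝ => R p.1 p.2) p)
    (hRtd : ∀ᶠ p in cusp (2 ^ 3 * m), DifferentiableAt ℝ (fun p : ℝ × ℝ => Rt p.1 p.2) p) :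
    Tendsto (fun p : ℝ × ℝ => pdy r p.1 p.2 / p.2) (cusp m) (𝓝 0) := by
  have hy := (tendsto_snd_cusp m).mono_right nhdsWithin_le_nhds
  have hq := tendsto_div_snd_of_expansion hP hR
  have hΦ := tendsto_prodMk_expansion_cusp hP hR
  -- with `P'_y = -1 + 2αy + R'_y` and `N = R'_y/y - 2 R/y² + y (α + R/y²)²`:
  -- `r'_y / y = R'_y/y + P'_y (R̃'_y(x,P)/P) (P/y) - β (x/y²) N / (P/y)²`
  have hPy := ((hy.const_mul (2 * α)).const_add (-1)).add (hRy.mul hy)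
  have hN := (hRy.sub (hR.const_mul 2)).add (hy.mul ((hR.const_add α).pow 2))
  have h := (hRy.add ((hPy.mul (hRty.comp hΦ)).mul hq)).sub
    ((((tendsto_fst_div_sq_cusp m).const_mul β).mul hN).div (hq.pow 2) (by norm_num))
  simp only [mul_zero, zero_mul, add_zero, sub_zero, zero_div] at h
  refine h.congr' ?_
  filter_upwards [eventually_snd_ne_zero_cusp m, hΦ.eventually (eventually_snd_ne_zero_cusp _),
    hRd, hΦ.eventually hRtd] with ⟨x, y⟩ hy0 hP0 hRd hRtd
  simp only [Pi.div_apply, Function.comp_apply] at hy0 hP0 hRd hRtd ⊢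
  rw [pdy_remainder hP hPt hr hRd hRtd hP0 hy0]
  field_simp
  rw [hP]
  ring

theorem tendsto_pdx_remainder_mul_cusp (hP : ∀ x y, P x y = -y + α * y ^ 2 + R x y)
    (hPt : ∀ x y, y ≠ 0 → Pt x y = y + β * x / y + Rt x y)
    (hr : ∀ x y, r x y = Pt x (P x y) - (-y + α * y ^ 2 - β * x / y))
    (hR : Tendsto (fun p : ℝ × ℝ => R p.1 p.2 / p.2 ^ 2) (cusp m) (𝓝 0))
    (hRx : Tendsto (fun p : ℝ × ℝ => pdx R p.1 p.2 * p.2) (cusp m) (𝓝 0))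
    (hRty : Tendsto (fun p : ℝ × ℝ => pdy Rt p.1 p.2 / p.2) (cusp (2 ^ 3 * m)) (𝓝 0))
    (hRtx : Tendsto (fun p : ℝ × ℝ => pdx Rt p.1 p.2 * p.2) (cusp (2 ^ 3 * m)) (𝓝 0))
    (hRd : ∀ᶠ p in cusp m, DifferentiableAt ℝ (fun p : ℝ × ℝ => R p.1 p.2) p)
    (hRtd : ∀ᶠ p in cusp (2 ^ 3 * m), DifferentiableAt ℝ (fun p : ℝ × ℝ => Rt p.1 p.2) p) :
    Tendsto (fun p : ℝ × ℝ => pdx r p.1 p.2 * p.2) (cusp m) (𝓝 0) := by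
  have hy := (tendsto_snd_cusp m).mono_right nhdsWithin_le_nhds
  have hq := tendsto_div_snd_of_expansion hP hR
  have hΦ := tendsto_prodMk_expansion_cusp hP hR
  -- `r'_x y = (R'_x y) (1 - β (x/y²)/(P/y)² + (R̃'_y(x,P)/P) P) + β y (α + R/y²)/(P/y)`
  -- `+ (R̃'_x(x,P) P)/(P/y)`
  have hS := ((((tendsto_fst_div_sq_cusp m).const_mul β).div (hq.pow 2) (by norm_num)).const_sub
    1).add ((hRty.comp hΦ).mul (hq.mul hy))
  have h := ((hRx.mul hS).add (((hy.const_mul β).mul (hR.const_add α)).div hq (by norm_num))).add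
    ((hRtx.comp hΦ).div hq (by norm_num))
  simp only [mul_zero, zero_mul, add_zero, zero_div] at h
  refine h.congr' ?_
  filter_upwards [eventually_snd_ne_zero_cusp m, hΦ.eventually (eventually_snd_ne_zero_cusp _),
    hRd, hΦ.eventually hRtd] with ⟨x, y⟩ hy0 hP0 hRd hRtd
  simp only [Pi.div_apply, Function.comp_apply] at hy0 hP0 hRd hRtd ⊢
  rw [pdx_remainder hP hPt hr hRd hRtd hP0 hy0]
  field_simp
  rw [hP]
  ring

theorem exists_contDiffOn_remainder_cuspRegion {n : WithTop ℕ∞} {δR δRt : ℝ}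
    (hP : ∀ x y, P x y = -y + α * y ^ 2 + R x y)
    (hPt : ∀ x y, y ≠ 0 → Pt x y = y + β * x / y + Rt x y)
    (hr : ∀ x y, r x y = Pt x (P x y) - (-y + α * y ^ 2 - β * x / y)) (hm : 0 < m)
    (hR : Tendsto (fun p : ℝ × ℝ => R p.1 p.2 / p.2 ^ 2) (cusp m) (𝓝 0))
    (hδR : 0 < δR) (hRC : ContDiffOn ℝ n (fun p : ℝ × ℝ => R p.1 p.2) (cuspRegion (2 * m) δR))
    (hδRt : 0 < δRt)
    (hRtC : ContDiffOn ℝ n (fun p : ℝ × ℝ => Rt p.1 p.2) (cuspRegion (2 * (2 ^ 3 * m)) δRt)) :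
    ∃ δ > 0, ContDiffOn ℝ n (fun p : ℝ × ℝ => r p.1 p.2) (cuspRegion m δ) := by
  have hΦ := tendsto_prodMk_expansion_cusp hP hR
  obtain ⟨δ, hδ, hsub⟩ := exists_cuspRegion_subset hm
    ((eventually_mem_cuspRegion hm (by linarith : m < 2 * m) hδR).and
      ((hΦ.eventually (eventually_snd_ne_zero_cusp _)).and
        (hΦ.eventually (eventually_mem_cuspRegion (by positivity)
          (by linarith : 2 ^ 3 * m < 2 * (2 ^ 3 * m)) hδRt))))
  exact ⟨δ, hδ, contDiffOn_remainder hP hPt hr (hRC.mono fun p hp => (hsub hp).1) hRtC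
    (fun p hp => (hsub hp).2.2) (fun p hp => (hsub hp).2.1)
    fun p hp => abs_pos.1 (abs_snd_pos_of_mem_cuspRegion hm hp)⟩

end Composition

theorem stmt_8_general
    (α β : ℝ)
    -- the maps provided by Lemmas 2.1 and 2.2 together with their expansions
    (P Pt R Rt : ℝ → ℝ → ℝ)
    (hP : ∀ x y : ℝ, P x y = -y + α * y ^ 2 + R x y)
    (hPt : ∀ x y : ℝ, y ≠ 0 → Pt x y = y + β * x / y + Rt x y)
    (hC2 : ∀ m : ℝ, 0 < m → ∃ δ > (0 : ℝ),
      ContDiffOn ℝ 2 (fun p : ℝ × ℝ => R p.1 p.2)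
        {p : ℝ × ℝ | (|p.1| / m) ^ ((1 : ℝ) / 3) < |p.2| ∧ |p.2| < δ} ∧
      ContDiffOn ℝ 2 (fun p : ℝ × ℝ => Rt p.1 p.2)
        {p : ℝ × ℝ | (|p.1| / m) ^ ((1 : ℝ) / 3) < |p.2| ∧ |p.2| < δ})
    (hRlim : ∀ m : ℝ, 0 < m → ∀ ε > (0 : ℝ), ∃ δ > (0 : ℝ), ∀ x y : ℝ,
      0 < |y| → |y| ≤ δ → |x| ≤ m * |y| ^ 3 →
      |R x y / y ^ 2| ≤ ε ∧ |pdy R x y / y| ≤ ε ∧ |pdx R x y * y| ≤ ε)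
    (hRtlim : ∀ m : ℝ, 0 < m → ∀ ε > (0 : ℝ), ∃ δ > (0 : ℝ), ∀ x y : ℝ,
      0 < |y| → |y| ≤ δ → |x| ≤ m * |y| ^ 3 →
      |Rt x y / y ^ 2| ≤ ε ∧ |pdy Rt x y / y| ≤ ε ∧ |pdx Rt x y * y| ≤ ε)
    -- the remainder of the composition
    (r : ℝ → ℝ → ℝ)
    (hr : ∀ x y : ℝ, r x y = Pt x (P x y) - (-y + α * y ^ 2 - β * x / y)) :
    ∀ m : ℝ, 0 < m →
      (∃ δ > (0 : ℝ), ContDiffOn ℝ 2 (fun p : ℝ × ℝ => r p.1 p.2)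
        {p : ℝ × ℝ | 0 < (|p.1| / m) ^ ((1 : ℝ) / 3) ∧
          (|p.1| / m) ^ ((1 : ℝ) / 3) < |p.2| ∧ |p.2| < δ}) ∧
      (∀ ε > (0 : ℝ), ∃ δ > (0 : ℝ), ∀ x y : ℝ,
        0 < |y| → |y| ≤ δ → |x| ≤ m * |y| ^ 3 →
        |r x y| ≤ ε ∧ |pdy r x y / y| ≤ ε ∧ |pdx r x y * y| ≤ ε) := by
  intro m hm
  have hm' : 0 < 2 ^ 3 * m := by positivity
  obtain ⟨hR, hRy, hRx⟩ := tendsto₃_cusp_zero_iff.1 (hRlim m hm)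
  obtain ⟨hRt, hRty, hRtx⟩ := tendsto₃_cusp_zero_iff.1 (hRtlim _ hm')
  obtain ⟨δR, hδR, hRC2, -⟩ := hC2 (2 * m) (by positivity)
  obtain ⟨δRt, hδRt, -, hRtC2⟩ := hC2 (2 * (2 ^ 3 * m)) (by positivity)
  have hRd := hRC2.eventually_differentiableAt_cusp two_ne_zero hm hδR
  have hRtd := hRtC2.eventually_differentiableAt_cusp two_ne_zero hm' hδRt
  obtain ⟨δ, hδ, hr2⟩ :=
    exists_contDiffOn_remainder_cuspRegion hP hPt hr hm hR hδR hRC2 hδRt hRtC2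
  exact ⟨⟨δ, hδ, hr2.mono fun p hp => hp.2⟩, tendsto₃_cusp_zero_iff.2
    ⟨tendsto_remainder_cusp hP hPt hr hR hRt,
      tendsto_pdy_remainder_div_cusp hP hPt hr hR hRy hRty hRd hRtd,
      tendsto_pdx_remainder_mul_cusp hP hPt hr hR hRx hRty hRtx hRd hRtd⟩⟩

/-- Corollary 2.4: the composition `𝒫̃ ∘ 𝒫` of the maps provided by Lemmas 2.1 and 2.2
expands as `𝒫̃(𝒫(y)) = -y + α y² - β x/y + r(x,y)`, where for any `m > 0` the remainder
`r` is `C²` on `{(x,y) : 0 < ∛(|x|/m) < |y|}` near the origin and satisfies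
`r → 0`, `r'_y/y → 0`, `r'_x·y → 0` as `|x| ≤ m|y|³`, `y → 0`. -/
theorem stmt_8
    (f g : ℝ → ℝ → ℝ)
    (hf0 : f 0 0 = 0)
    (hfg0 : pdy f 0 0 * g 0 0 ≠ 0)
    (α β : ℝ)
    (hα : α = 2 * (pdx f 0 0 + pdy g 0 0) / g 0 0 + pdyy f 0 0 / pdy f 0 0)
    (hβ : β = -2 * g 0 0 / pdy f 0 0)
    -- the maps provided by Lemmas 2.1 and 2.2 together with their expansions
    (P Pt R Rt : ℝ → ℝ → ℝ)
    (hP : ∀ x y : ℝ, P x y = -y + α * y ^ 2 + R x y)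
    (hPt : ∀ x y : ℝ, y ≠ 0 → Pt x y = y + β * x / y + Rt x y)
    (hC2 : ∀ m : ℝ, 0 < m → ∃ δ > (0 : ℝ),
      ContDiffOn ℝ 2 (fun p : ℝ × ℝ => R p.1 p.2)
        {p : ℝ × ℝ | (|p.1| / m) ^ ((1 : ℝ) / 3) < |p.2| ∧ |p.2| < δ} ∧
      ContDiffOn ℝ 2 (fun p : ℝ × ℝ => Rt p.1 p.2)
        {p : ℝ × ℝ | (|p.1| / m) ^ ((1 : ℝ) / 3) < |p.2| ∧ |p.2| < δ})
    (hRlim : ∀ m : ℝ, 0 < m → ∀ ε > (0 : ℝ), ∃ δ > (0 : ℝ), ∀ x y : ℝ,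
      0 < |y| → |y| ≤ δ → |x| ≤ m * |y| ^ 3 →
      |R x y / y ^ 2| ≤ ε ∧ |pdy R x y / y| ≤ ε ∧ |pdx R x y * y| ≤ ε)
    (hRtlim : ∀ m : ℝ, 0 < m → ∀ ε > (0 : ℝ), ∃ δ > (0 : ℝ), ∀ x y : ℝ,
      0 < |y| → |y| ≤ δ → |x| ≤ m * |y| ^ 3 →
      |Rt x y / y ^ 2| ≤ ε ∧ |pdy Rt x y / y| ≤ ε ∧ |pdx Rt x y * y| ≤ ε)
    -- the remainder of the composition
    (r : ℝ → ℝ → ℝ)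
    (hr : ∀ x y : ℝ, r x y = Pt x (P x y) - (-y + α * y ^ 2 - β * x / y)) :
    ∀ m : ℝ, 0 < m →
      (∃ δ > (0 : ℝ), ContDiffOn ℝ 2 (fun p : ℝ × ℝ => r p.1 p.2)
        {p : ℝ × ℝ | 0 < (|p.1| / m) ^ ((1 : ℝ) / 3) ∧
          (|p.1| / m) ^ ((1 : ℝ) / 3) < |p.2| ∧ |p.2| < δ}) ∧
      (∀ ε > (0 : ℝ), ∃ δ > (0 : ℝ), ∀ x y : ℝ,
        0 < |y| → |y| ≤ δ → |x| ≤ m * |y| ^ 3 →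
        |r x y| ≤ ε ∧ |pdy r x y / y| ≤ ε ∧ |pdx r x y * y| ≤ ε) :=
  stmt_8_general α β P Pt R Rt hP hPt hC2 hRlim hRtlim r hr
end

section
/- Let F : ℝ × ℝ × ℝ → ℝ be C¹ with F(0,0,0) = 0. Assume there exist M > 0, m > 0, δ₀ > 0 and n ∈ ℕ such that |F(0,ζ,y)| ≤ M·|y|ⁿ for all |ζ| ≤ m|y|³ and |y| ≤ δ₀. Assume further that there exist q ∈ (0,1) and L ≠ 0 such that F'_ξ(ξ,ζ,y) → L as |ξ| ≤ (M/(|L|q))·|y|ⁿ, |ζ| ≤ m|y|³, y → 0 (i.e. for every ε > 0 there is δ > 0 with |F'_ξ(ξ,ζ,y) − L| ≤ ε whenever 0 < |y| ≤ δ, |ξ| ≤ (M/(|L|q))·|y|ⁿ and |ζ| ≤ m|y|³). Then there exists δ ∈ (0, δ₀) such that for every (ζ,y) with |ζ| ≤ m|y|³ and |y| ≤ δ, the equation F(ξ,ζ,y) = 0 has a unique solution ξ = ξ(ζ,y) satisfying |ξ(ζ,y)| ≤ (M/(|L|q))·|y|ⁿ. Moreover, the function (ζ,y) ↦ ξ(ζ,y)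 is differentiable at every point of the interior of the region {(ζ,y) : |ζ| ≤ m|y|³, |y| ≤ δ}. -/
/-!
Dividing by `L` normalizes the `ξ`-derivative of `F` to lie within `(1 - q) / 2` of `1` on the
cusp `|ξ| ≤ R |y|ⁿ`, `|ζ| ≤ m |y|³` with `R = M / (|L| q)`; on its tip `y = 0` this follows from
the hypothesis by continuity of `∂F/∂ξ`. Hence `F(·, ζ, y) / L` is strictly increasing there,
and since `|F(0, ζ, y)| ≤ M |y|ⁿ = q |L| R |y|ⁿ`, the mean value theorem locates its unique zero
within `2q / (1 + q) · R |y|ⁿ < R |y|ⁿ` of `0`. Interior points of the region have `y ≠ 0`, so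
there the zero lies strictly inside the box; by uniqueness it then agrees near such a point with
the differentiable implicit function of the classical theorem.
-/

open Set Filter Topology

theorem exists_unique_zero_of_le_deriv {f : ℝ → ℝ} {B κ : ℝ} (hκ : 0 < κ)
    (hf : ContinuousOn f (Icc (-B) B)) (hf' : DifferentiableOn ℝ f (Ioo (-B) B))
    (hderiv : ∀ x ∈ Ioo (-B) B, κ ≤ deriv f x) (h0 : |f 0| ≤ κ * B) :
    ∃ ξ, f ξ = 0 ∧ κ * |ξ| ≤ |f 0| ∧ ∀ ξ' ∈ Icc (-B) B, f ξ' = 0 → ξ' = ξ := by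
  have hB : 0 ≤ B := nonneg_of_mul_nonneg_right ((abs_nonneg _).trans h0) hκ
  have h0mem : (0 : ℝ) ∈ Icc (-B) B := ⟨neg_nonpos.mpr hB, hB⟩
  have hgrow : ∀ x ∈ Icc (-B) B, ∀ y ∈ Icc (-B) B, x ≤ y → κ * (y - x) ≤ f y - f x :=
    (convex_Icc _ _).mul_sub_le_image_sub_of_le_deriv hf (by rwa [interior_Icc])
      (by rwa [interior_Icc])
  have hmono : StrictMonoOn f (Icc (-B) B) := fun x hx y hy hxy => by
    nlinarith [hgrow x hx y hy hxy.le]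
  obtain ⟨h0l, h0r⟩ := abs_le.mp h0
  obtain ⟨ξ, hξ, hfξ⟩ : ∃ ξ ∈ Icc (-B) B, f ξ = 0 := by
    refine intermediate_value_Icc (neg_le_self hB) hf ⟨?_, ?_⟩
    · linarith [hgrow (-B) ⟨le_rfl, by linarith⟩ 0 h0mem (by linarith)]
    · linarith [hgrow 0 h0mem B ⟨by linarith, le_rfl⟩ hB]
  refine ⟨ξ, hfξ, ?_, fun ξ' hξ' hfξ' => hmono.injOn hξ' hξ (hfξ'.trans hfξ.symm)⟩
  rcases le_total 0 ξ with hξ0 | hξ0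
  · have := hgrow 0 h0mem ξ hξ hξ0
    rw [abs_of_nonneg hξ0]
    linarith [neg_abs_le (f 0)]
  · have := hgrow ξ hξ 0 h0mem hξ0
    rw [abs_of_nonpos hξ0]
    linarith [le_abs_self (f 0)]

theorem exists_unique_zero_of_abs_deriv_sub_le {f : ℝ → ℝ} {B L q : ℝ} (hL : L ≠ 0)
    (hq : 0 < q) (hq1 : q < 1) (hf : DifferentiableOn ℝ f (Icc (-B) B))
    (hderiv : ∀ x ∈ Ioo (-B) B, |deriv f x - L| ≤ |L| * (1 - q) / 2)
    (h0 : |f 0| ≤ |L| * q * B) :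
    ∃ ξ, f ξ = 0 ∧ |ξ| ≤ B ∧ (∀ ξ', |ξ'| ≤ B → f ξ' = 0 → ξ' = ξ) ∧ (0 < B → |ξ| < B) := by
  have hL' : 0 < |L| := abs_pos.mpr hL
  have hκ : 0 < (1 + q) / 2 := by linarith
  have hB : 0 ≤ B := nonneg_of_mul_nonneg_right ((abs_nonneg _).trans h0) (by positivity)
  have hderivL : ∀ x ∈ Ioo (-B) B, (1 + q) / 2 ≤ deriv (fun s => f s / L) x := by
    intro x hx
    rw [deriv_div_const]
    have : |deriv f x / L - 1| ≤ (1 - q) / 2 := by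
      rw [show deriv f x / L - 1 = (deriv f x - L) / L by field_simp, abs_div, div_le_iff₀ hL']
      linarith [hderiv x hx]
    linarith [(abs_le.mp this).1]
  have h0L : |f 0 / L| ≤ q * B := by
    rw [abs_div, div_le_iff₀ hL']
    linarith
  obtain ⟨ξ, hfξ, hξ, huniq⟩ := exists_unique_zero_of_le_deriv hκ
    (hf.continuousOn.div_const L) ((hf.mono Ioo_subset_Icc_self).div_const L) hderivL
    (h0L.trans (by nlinarith))
  have hξB : (1 + q) / 2 * |ξ| ≤ q * B := hξ.trans h0L
  refine ⟨ξ, div_eq_zero_iff.mp hfξ |>.resolve_right hL, by nlinarith [abs_nonneg ξ],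
    fun ξ' hξ' hfξ' => huniq ξ' (abs_le.mp hξ') (by simp [hfξ']), fun hB => by nlinarith⟩

theorem IsClosed.forall_mem_cusp_of_abs_pos {S : Set ((ℝ × ℝ) × ℝ)} (hS : IsClosed S)
    {R m δ : ℝ} {n : ℕ} (hR : 0 ≤ R) (hm : 0 ≤ m) (hδ : 0 < δ)
    (h : ∀ ξ ζ y : ℝ, 0 < |y| → |y| ≤ δ → |ξ| ≤ R * |y| ^ n → |ζ| ≤ m * |y| ^ 3 →
      ((ζ, y), ξ) ∈ S) :
    ∀ ξ ζ y : ℝ, |y| ≤ δ → |ξ| ≤ R * |y| ^ n → |ζ| ≤ m * |y| ^ 3 → ((ζ, y), ξ) ∈ S := by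
  intro ξ ζ y hy hξ hζ
  rcases eq_or_ne y 0 with rfl | hy0
  · obtain rfl : ζ = 0 := by simpa using hζ
    have hIoc : Ioc 0 δ ⊆ (fun t => (((0 : ℝ), t), ξ)) ⁻¹' S := by
      rintro t ⟨ht0, htδ⟩
      have ht : |t| = t := abs_of_pos ht0
      refine h ξ 0 t (by rwa [ht]) (by rwa [ht]) (hξ.trans ?_) (by rw [abs_zero]; positivity)
      exact mul_le_mul_of_nonneg_left (pow_le_pow_left₀ (abs_nonneg 0) (by simp) n) hR
    have hclosed : IsClosed ((fun t => (((0 : ℝ), t), ξ)) ⁻¹' S) := hS.preimage (by fun_prop)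
    exact hclosed.closure_subset_iff.mpr hIoc (by rw [closure_Ioc hδ.ne]; exact ⟨le_rfl, hδ.le⟩)
  · exact h ξ ζ y (abs_pos.mpr hy0) hy hξ hζ

theorem snd_ne_zero_of_mem_interior {s : Set (ℝ × ℝ)} (hs : ∀ p ∈ s, p.2 = 0 → p.1 = 0)
    {p : ℝ × ℝ} (hp : p ∈ interior s) : p.2 ≠ 0 := by
  intro hp2
  have hline : (fun x : ℝ => (x, p.2)) ⁻¹' interior s ⊆ {0} := fun x hx =>
    hs _ (interior_subset hx) hp2
  have hopen : IsOpen ((fun x : ℝ => (x, p.2)) ⁻¹' interior s) :=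
    isOpen_interior.preimage (continuous_id.prodMk continuous_const)
  have : (fun x : ℝ => (x, p.2)) ⁻¹' interior s = {0} :=
    (Set.Nonempty.subset_singleton_iff ⟨p.1, hp⟩).mp hline
  exact not_isOpen_singleton (0 : ℝ) (this ▸ hopen)

section

variable {E : Type*} [NormedAddCommGroup E] [NormedSpace ℝ E]

theorem HasFDerivAt.hasDerivAt_snd {F : Type*} [NormedAddCommGroup F] [NormedSpace ℝ F]
    {G : E × ℝ → F} {G' : E × ℝ →L[ℝ] F} {v : E × ℝ} (hG : HasFDerivAt G G' v) :
    HasDerivAt (fun s => G (v.1, s)) (G' (0, 1)) v.2 :=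
  hG.comp_hasDerivAt v.2 ((hasDerivAt_const _ _).prodMk (hasDerivAt_id _))

theorem ContDiff.continuous_deriv_snd {G : E × ℝ → ℝ} (hG : ContDiff ℝ 1 G) :
    Continuous fun v : E × ℝ => deriv (fun s => G (v.1, s)) v.2 := by
  have hderiv : (fun v : E × ℝ => deriv (fun s => G (v.1, s)) v.2) =
      fun v => fderiv ℝ G v (0, 1) :=
    funext fun v => ((hG.differentiable one_ne_zero v).hasFDerivAt.hasDerivAt_snd).deriv
  rw [hderiv]
  exact (hG.continuous_fderiv one_ne_zero).clm_apply continuous_const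

variable [CompleteSpace E]

theorem differentiableAt_of_locally_unique_zero {G : E × ℝ → ℝ} {G' : E × ℝ →L[ℝ] ℝ}
    {g : E → ℝ} {p : E} (hG : HasStrictFDerivAt G G' (p, g p)) (hG' : G' (0, 1) ≠ 0)
    (hzero : G (p, g p) = 0) (huniq : ∀ᶠ v in 𝓝 (p, g p), G v = 0 → v.2 = g v.1) :
    DifferentiableAt ℝ g p := by
  have hinv : (G' ∘L .inr ℝ E ℝ).IsInvertible := by
    refine .of_inverse (g := (G' (0, 1))⁻¹ • ContinuousLinearMap.id ℝ ℝ) ?_ ?_ <;>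
      ext <;> simp [hG']
  set ψ := hG.implicitFunctionOfProdDomain hinv
  have hψ : Tendsto (fun u => (u, ψ u)) (𝓝 p) (𝓝 (p, g p)) :=
    tendsto_id.prodMk_nhds (hG.tendsto_implicitFunctionOfProdDomain hinv)
  have hgψ : g =ᶠ[𝓝 p] ψ := by
    filter_upwards [hG.eventually_apply_implicitFunctionOfProdDomain hinv, hψ.eventually huniq]
      with u hGu hu
    exact (hu (hGu.trans hzero)).symm
  exact hgψ.differentiableAt_iff.mpr
    (hG.hasStrictFDerivAt_implicitFunctionOfProdDomain hinv).differentiableAt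

theorem differentiableAt_of_unique_zero_of_abs_lt {G : E × ℝ → ℝ} (hG : ContDiff ℝ 1 G)
    {g b : E → ℝ} (hb : Continuous b) {U : Set E} (hU : IsOpen U)
    (huniq : ∀ u ∈ U, ∀ ξ, |ξ| ≤ b u → G (u, ξ) = 0 → ξ = g u) {p : E} (hp : p ∈ U)
    (hlt : |g p| < b p) (hzero : G (p, g p) = 0) (hderiv : deriv (fun s => G (p, s)) (g p) ≠ 0) :
    DifferentiableAt ℝ g p := by
  have hbox : IsOpen {v : E × ℝ | v.1 ∈ U ∧ |v.2| < b v.1} :=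
    (hU.preimage continuous_fst).inter
      (isOpen_lt (continuous_abs.comp continuous_snd) (hb.comp continuous_fst))
  refine differentiableAt_of_locally_unique_zero (hG.hasStrictFDerivAt one_ne_zero) ?_ hzero ?_
  · rwa [← ((hG.differentiable one_ne_zero _).hasFDerivAt.hasDerivAt_snd).deriv]
  · filter_upwards [hbox.mem_nhds ⟨hp, hlt⟩] with v ⟨hvU, hvb⟩ hGv
    exact huniq v.1 hvU v.2 hvb.le hGv

end

theorem stmt_14_general
    (F : ℝ → ℝ → ℝ → ℝ)
    (hF : ContDiff ℝ 1 (fun p : ℝ × ℝ × ℝ => F p.1 p.2.1 p.2.2))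
    (M m δ₀ : ℝ) (hM : 0 < M) (hm : 0 < m) (hδ₀ : 0 < δ₀) (n : ℕ)
    (hbd : ∀ ζ y : ℝ, |ζ| ≤ m * |y| ^ 3 → |y| ≤ δ₀ → |F 0 ζ y| ≤ M * |y| ^ n)
    (q L : ℝ) (hq : 0 < q) (hq1 : q < 1) (hL : L ≠ 0)
    (hlim : ∀ ε > (0 : ℝ), ∃ δ > (0 : ℝ), ∀ ξ ζ y : ℝ,
      0 < |y| → |y| ≤ δ → |ξ| ≤ M / (|L| * q) * |y| ^ n → |ζ| ≤ m * |y| ^ 3 →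
      |deriv (fun s => F s ζ y) ξ - L| ≤ ε) :
    ∃ δ : ℝ, 0 < δ ∧ δ < δ₀ ∧ ∃ ξf : ℝ → ℝ → ℝ,
      (∀ ζ y : ℝ, |ζ| ≤ m * |y| ^ 3 → |y| ≤ δ →
        F (ξf ζ y) ζ y = 0 ∧
        |ξf ζ y| ≤ M / (|L| * q) * |y| ^ n ∧
        ∀ ξ : ℝ, |ξ| ≤ M / (|L| * q) * |y| ^ n → F ξ ζ y = 0 → ξ = ξf ζ y) ∧
      ∀ p : ℝ × ℝ, p ∈ interior {p : ℝ × ℝ | |p.1| ≤ m * |p.2| ^ 3 ∧ |p.2| ≤ δ} →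
        DifferentiableAt ℝ (fun p : ℝ × ℝ => ξf p.1 p.2) p := by
  have hL' : 0 < |L| := abs_pos.mpr hL
  set R := M / (|L| * q)
  have hR : 0 < R := by positivity
  set G : (ℝ × ℝ) × ℝ → ℝ := fun v => F v.2 v.1.1 v.1.2
  have hG : ContDiff ℝ 1 G := hF.comp (contDiff_snd.prodMk contDiff_fst)
  obtain ⟨δ₁, hδ₁, hlim₁⟩ := hlim (|L| * (1 - q) / 2) (by nlinarith)
  have hderiv : ∀ ξ ζ y : ℝ, |y| ≤ δ₁ → |ξ| ≤ R * |y| ^ n → |ζ| ≤ m * |y| ^ 3 →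
      |deriv (fun s => F s ζ y) ξ - L| ≤ |L| * (1 - q) / 2 :=
    (isClosed_le (hG.continuous_deriv_snd.sub continuous_const).abs continuous_const)
      |>.forall_mem_cusp_of_abs_pos hR.le hm.le hδ₁ hlim₁
  obtain ⟨δ, hδ, hδδ₁, hδδ₀⟩ : ∃ δ, 0 < δ ∧ δ ≤ δ₁ ∧ δ < δ₀ :=
    ⟨min δ₁ (δ₀ / 2), lt_min hδ₁ (half_pos hδ₀), min_le_left _ _,
      (min_le_right _ _).trans_lt (half_lt_self hδ₀)⟩
  have hzero : ∀ ζ y : ℝ, |ζ| ≤ m * |y| ^ 3 → |y| ≤ δ → ∃ ξ, F ξ ζ y = 0 ∧ |ξ| ≤ R * |y| ^ n ∧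
      (∀ ξ', |ξ'| ≤ R * |y| ^ n → F ξ' ζ y = 0 → ξ' = ξ) ∧ (0 < R * |y| ^ n → |ξ| < R * |y| ^ n) :=
    fun ζ y hζ hy => exists_unique_zero_of_abs_deriv_sub_le hL hq hq1
      ((hG.differentiable one_ne_zero).comp (f := fun s : ℝ => ((ζ, y), s))
        (by fun_prop)).differentiableOn
      (fun x hx => hderiv x ζ y (hy.trans hδδ₁) (abs_le.mpr ⟨hx.1.le, hx.2.le⟩) hζ)
      (calc |F 0 ζ y| ≤ M * |y| ^ n := hbd ζ y hζ (hy.trans hδδ₀.le)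
        _ = |L| * q * (R * |y| ^ n) := by simp only [R]; field_simp)
  choose! ξf hξf using hzero
  refine ⟨δ, hδ, hδδ₀, ξf, fun ζ y hζ hy => (hξf ζ y hζ hy).imp_right fun h => ⟨h.1, h.2.1⟩,
    fun p hp => ?_⟩
  obtain ⟨hp1, hp2⟩ := interior_subset hp
  have hy : p.2 ≠ 0 := snd_ne_zero_of_mem_interior (fun u hu hu2 => by simpa [hu2] using hu.1) hp
  obtain ⟨hFξ, -, -, hlt⟩ := hξf p.1 p.2 hp1 hp2
  have hlt' := hlt (mul_pos hR (pow_pos (abs_pos.mpr hy) n))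
  refine differentiableAt_of_unique_zero_of_abs_lt hG (b := fun u => R * |u.2| ^ n) (by fun_prop)
    isOpen_interior (fun u hu => (hξf u.1 u.2 (interior_subset hu).1 (interior_subset hu).2).2.2.1)
    hp hlt' hFξ fun h0 => ?_
  have hD := hderiv (ξf p.1 p.2) p.1 p.2 (hp2.trans hδδ₁) hlt'.le hp1
  rw [show deriv (fun s => F s p.1 p.2) (ξf p.1 p.2) = 0 from h0, zero_sub, abs_neg] at hD
  nlinarith

/-- Theorem C.1: an implicit function theorem for implicit functions that branch from
the boundary of a set. -/
theorem stmt_14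
    (F : ℝ → ℝ → ℝ → ℝ)
    (hF : ContDiff ℝ 1 (fun p : ℝ × ℝ × ℝ => F p.1 p.2.1 p.2.2))
    (hF0 : F 0 0 0 = 0)
    (M m δ₀ : ℝ) (hM : 0 < M) (hm : 0 < m) (hδ₀ : 0 < δ₀) (n : ℕ)
    (hbd : ∀ ζ y : ℝ, |ζ| ≤ m * |y| ^ 3 → |y| ≤ δ₀ → |F 0 ζ y| ≤ M * |y| ^ n)
    (q L : ℝ) (hq : 0 < q) (hq1 : q < 1) (hL : L ≠ 0)
    (hlim : ∀ ε > (0 : ℝ), ∃ δ > (0 : ℝ), ∀ ξ ζ y : ℝ,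
      0 < |y| → |y| ≤ δ → |ξ| ≤ M / (|L| * q) * |y| ^ n → |ζ| ≤ m * |y| ^ 3 →
      |deriv (fun s => F s ζ y) ξ - L| ≤ ε) :
    ∃ δ : ℝ, 0 < δ ∧ δ < δ₀ ∧ ∃ ξf : ℝ → ℝ → ℝ,
      (∀ ζ y : ℝ, |ζ| ≤ m * |y| ^ 3 → |y| ≤ δ →
        F (ξf ζ y) ζ y = 0 ∧
        |ξf ζ y| ≤ M / (|L| * q) * |y| ^ n ∧
        ∀ ξ : ℝ, |ξ| ≤ M / (|L| * q) * |y| ^ n → F ξ ζ y = 0 → ξ = ξf ζ y) ∧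
      ∀ p : ℝ × ℝ, p ∈ interior {p : ℝ × ℝ | |p.1| ≤ m * |p.2| ^ 3 ∧ |p.2| ≤ δ} →
        DifferentiableAt ℝ (fun p : ℝ × ℝ => ξf p.1 p.2) p :=
  stmt_14_general F hF M m δ₀ hM hm hδ₀ n hbd q L hq hq1 hL hlim
end

section
/- Let δ > 0 and let X : [−δ,δ]³ → ℝ be C⁴ with X(0,x,y) = x for all x, y. For t ≠ 0 define ρ(t,x,y) = (X(t,x,y) − x)/t − X'_t(0,x,y) − X''_tt(0,x,y)·t/2. Then, uniformly in (x,y) ∈ [−δ,δ]²: ρ(t,x,y) → 0, ρ'_t(t,x,y) → 0, ρ'_y(t,x,y) → 0, ρ''_ty(t,x,y) → 0, ρ''_yy(t,x,y) → 0, ρ'_x(t,x,y) → 0, ρ''_tx(t,x,y) → 0 and ρ''_xx(t,x,y) → 0 as t → 0, and ρ''_tt(t,x,y) → X'''_ttt(0,x,y)/3 as t → 0. -/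
/-!
Write `F(t, x, y) = X(t, x, y)`. Since `X(0, x, y) = x`, `ρ` is the quotient by `t` of the
second-order Taylor remainder of `F` in `t`; call it `ρ_F`, and define `ρ_G` likewise for any `G`.
Taylor's theorem bounds `ρ_G` and `∂ₜρ_G` by the oscillation of `G_tt` on `[0, t]`, and
`∂ₜ²ρ_G - G_ttt(0)/3` by that of `G_ttt`; both tend to `0` uniformly on the compact cube.
Partial derivatives of a `C²` function commute, so `∂_y ρ_F = ρ_{F_y}`, `∂_y ∂ₜ ρ_F = ∂ₜ ρ_{F_y}`,
`∂_y² ρ_F = ρ_{F_yy}`, and likewise in `x`: every estimate reduces to the first ones for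
`F`, `F_y`, `F_yy`, `F_x`, `F_xx`, all of them `C²`.
-/

open Set Filter Topology

section PartialWithin

variable {E F : Type*} [NormedAddCommGroup E] [NormedSpace ℝ E]
  [NormedAddCommGroup F] [NormedSpace ℝ F] {s : Set E} {g : E → F} {p : E}

noncomputable def partialWithin (s : Set E) (v : E) (g : E → F) (p : E) : F :=
  fderivWithin ℝ g s p v

theorem ContDiffOn.partialWithin {m n : WithTop ℕ∞} (hg : ContDiffOn ℝ n g s)
    (hs : UniqueDiffOn ℝ s) (hmn : m + 1 ≤ n) (v : E) :
    ContDiffOn ℝ m (_root_.partialWithin s v g) s :=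
  (hg.fderivWithin hs hmn).clm_apply contDiffOn_const

theorem ContDiffOn.iterate_partialWithin {n : WithTop ℕ∞} {m k : ℕ} (hg : ContDiffOn ℝ n g s)
    (hs : UniqueDiffOn ℝ s) (hmk : ((m + k : ℕ) : WithTop ℕ∞) ≤ n) (v : E) :
    ContDiffOn ℝ m ((_root_.partialWithin s v)^[k] g) s := by
  induction k generalizing g n with
  | zero => exact hg.of_le hmk
  | succ k ih =>
    rw [Function.iterate_succ_apply]
    exact ih ((hg.of_le hmk).partialWithin (m := (m + k : ℕ)) hs (by norm_cast) v) le_rfl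

theorem DifferentiableWithinAt.hasDerivWithinAt_comp_partialWithin {γ : ℝ → E} {v : E}
    {I : Set ℝ} {u : ℝ} (hg : DifferentiableWithinAt ℝ g s (γ u))
    (hγ : HasDerivWithinAt γ v I u) (hmaps : MapsTo γ I s) :
    HasDerivWithinAt (g ∘ γ) (partialWithin s v g (γ u)) I u :=
  hg.hasFDerivWithinAt.comp_hasDerivWithinAt u hγ hmaps

theorem partialWithin_congr {g₁ : E → F} (h : EqOn g g₁ s) (hp : p ∈ s) (v : E) :
    partialWithin s v g p = partialWithin s v g₁ p := by
  rw [partialWithin, partialWithin, fderivWithin_congr' h.symm hp]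

theorem partialWithin_comm (hg : ContDiffOn ℝ 2 g s) (hs : UniqueDiffOn ℝ s)
    (hsi : s ⊆ closure (interior s)) (hp : p ∈ s) (v w : E) :
    partialWithin s v (partialWithin s w g) p = partialWithin s w (partialWithin s v g) p := by
  have hsymm := (hg p hp).isSymmSndFDerivWithinAt (by simp) hs (hsi hp) hp
  have hdiff : DifferentiableWithinAt ℝ (fderivWithin ℝ g s) s p :=
    ((hg.fderivWithin hs (by norm_num)).differentiableOn one_ne_zero) p hp
  have hsecond : ∀ a b, partialWithin s a (partialWithin s b g) p =
      fderivWithin ℝ (fderivWithin ℝ g s) s p a b := by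
    intro a b
    change fderivWithin ℝ (fun q => fderivWithin ℝ g s q b) s p a = _
    rw [fderivWithin_clm_apply (hs p hp) hdiff (differentiableWithinAt_const b),
      fderivWithin_const_apply]
    simp
  rw [hsecond, hsecond, hsymm.eq]

theorem partialWithin_iterate_comm {n : WithTop ℕ∞} {k : ℕ} (hg : ContDiffOn ℝ n g s)
    (hkn : ((k + 1 : ℕ) : WithTop ℕ∞) ≤ n) (hs : UniqueDiffOn ℝ s)
    (hsi : s ⊆ closure (interior s)) (v w : E) :
    EqOn (partialWithin s v ((partialWithin s w)^[k] g))
      ((partialWithin s w)^[k] (partialWithin s v g)) s := by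
  induction k generalizing g n with
  | zero => exact fun _ _ => rfl
  | succ k ih =>
    intro p hp
    rw [Function.iterate_succ_apply', Function.iterate_succ_apply',
      partialWithin_comm
        (hg.iterate_partialWithin (m := 2) hs (le_trans (by norm_cast; omega) hkn) w) hs hsi hp]
    exact partialWithin_congr (ih hg (le_trans (by norm_cast; omega) hkn)) hp w

end PartialWithin

section DerivBound

variable {𝕜 F : Type*} [NontriviallyNormedField 𝕜] [NormedAddCommGroup F] [NormedSpace 𝕜 F]
  {f g : 𝕜 → F} {c : F} {s : Set 𝕜} {y : 𝕜}

/- At `x = ±δ` or `y = ±δ` the two-sided `deriv` of the statement sees values of `X` outside the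
cube, about which nothing is known: it is then either the one-sided derivative or the junk `0`. -/
theorem HasDerivWithinAt.norm_deriv_le (h : HasDerivWithinAt f c s y)
    (hs : UniqueDiffWithinAt 𝕜 s y) : ‖deriv f y‖ ≤ ‖c‖ := by
  by_cases hd : DifferentiableAt 𝕜 f y
  · rw [hs.eq_deriv s hd.hasDerivAt.hasDerivWithinAt h]
  · simp [deriv_zero_of_not_differentiableAt hd]

theorem HasDerivWithinAt.norm_deriv_deriv_le (h : HasDerivWithinAt g c (insert y s) y)
    (hfg : EqOn (deriv f) g s) (hs : UniqueDiffWithinAt 𝕜 s y) (hy : y ∈ closure s) :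
    ‖deriv (deriv f) y‖ ≤ ‖c‖ := by
  by_cases hd : DifferentiableAt 𝕜 (deriv f) y
  · have : NeBot (𝓝[s] y) := mem_closure_iff_nhdsWithin_neBot.1 hy
    have hfy : deriv f y = g y :=
      tendsto_nhds_unique ((hd.continuousAt.tendsto.mono_left nhdsWithin_le_nhds).congr'
        (eventually_nhdsWithin_of_forall hfg))
        ((h.continuousWithinAt.mono (subset_insert y s)).tendsto)
    refine (h.congr (fun z hz => ?_) hfy).norm_deriv_le (hs.mono (subset_insert y s))
    rcases hz with rfl | hz
    exacts [hfy, hfg hz]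
  · simp [deriv_zero_of_not_differentiableAt hd]

end DerivBound

section Taylor

variable {g g₁ g₂ g₃ : ℝ → ℝ} {t ε : ℝ}

theorem abs_le_mul_pow_succ_of_hasDerivAt {φ φ' : ℝ → ℝ} {C : ℝ} {n : ℕ} (hC : 0 ≤ C)
    (h0 : φ 0 = 0) (hφ : ∀ s ∈ uIcc 0 t, HasDerivAt φ (φ' s) s)
    (hφ' : ∀ s ∈ uIcc 0 t, |φ' s| ≤ C * |s| ^ n) :
    ∀ s ∈ uIcc 0 t, |φ s| ≤ C * |s| ^ (n + 1) := by
  intro s hs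
  have hsub : uIcc 0 s ⊆ uIcc 0 t := uIcc_subset_uIcc left_mem_uIcc hs
  have hle : ∀ r ∈ uIcc 0 s, |r| ≤ |s| := fun r hr => by
    simpa using abs_sub_left_of_mem_uIcc hr
  have := (convex_uIcc 0 s).norm_image_sub_le_of_norm_hasDerivWithin_le
    (fun r hr => (hφ r (hsub hr)).hasDerivWithinAt)
    (fun r hr => (Real.norm_eq_abs _ ▸ hφ' r (hsub hr)).trans
      (mul_le_mul_of_nonneg_left (pow_le_pow_left₀ (abs_nonneg r) (hle r hr) n) hC))
    left_mem_uIcc right_mem_uIcc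
  simpa [h0, pow_succ, mul_assoc] using this

variable (hg : ∀ s ∈ uIcc 0 t, HasDerivAt g (g₁ s) s)
  (hg₁ : ∀ s ∈ uIcc 0 t, HasDerivAt g₁ (g₂ s) s)

include hg hg₁ in
theorem taylor_two_bounds (hg₂ : ∀ s ∈ uIcc 0 t, |g₂ s - g₂ 0| ≤ ε) :
    ∀ s ∈ uIcc 0 t, |g₁ s - g₁ 0 - s * g₂ 0| ≤ ε * |s| ^ 1 ∧
      |g s - g 0 - s * g₁ 0 - s ^ 2 / 2 * g₂ 0| ≤ ε * |s| ^ 2 := by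
  have hε : 0 ≤ ε := by simpa using hg₂ 0 left_mem_uIcc
  have h₁ := abs_le_mul_pow_succ_of_hasDerivAt (n := 0) hε (by simp)
    (fun s hs => ((hg₁ s hs).sub_const (g₁ 0)).sub (hasDerivAt_mul_const (g₂ 0)))
    (by simpa using hg₂)
  have h₀ := abs_le_mul_pow_succ_of_hasDerivAt hε (by simp)
    (fun s hs => (((hg s hs).sub_const (g 0)).sub (hasDerivAt_mul_const (g₁ 0))).sub
      ((((hasDerivAt_pow 2 s).div_const 2).mul_const (g₂ 0)).congr_deriv (by ring))) h₁
  exact fun s hs => ⟨h₁ s hs, h₀ s hs⟩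

include hg hg₁ in
theorem taylor_three_bounds (hg₂ : ∀ s ∈ uIcc 0 t, HasDerivAt g₂ (g₃ s) s)
    (hg₃ : ∀ s ∈ uIcc 0 t, |g₃ s - g₃ 0| ≤ ε) :
    |g₂ t - g₂ 0 - t * g₃ 0| ≤ ε * |t| ^ 1 ∧
      |g₁ t - g₁ 0 - t * g₂ 0 - t ^ 2 / 2 * g₃ 0| ≤ ε * |t| ^ 2 ∧
      |g t - g 0 - t * g₁ 0 - t ^ 2 / 2 * g₂ 0 - t ^ 3 / 6 * g₃ 0| ≤ ε * |t| ^ 3 := by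
  have hε : 0 ≤ ε := by simpa using hg₃ 0 left_mem_uIcc
  have h₂₁ := taylor_two_bounds hg₁ hg₂ hg₃
  have h₀ := abs_le_mul_pow_succ_of_hasDerivAt hε (by simp)
    (fun s hs => ((((hg s hs).sub_const (g 0)).sub (hasDerivAt_mul_const (g₁ 0))).sub
      ((((hasDerivAt_pow 2 s).div_const 2).mul_const (g₂ 0)).congr_deriv (by ring))).sub
      ((((hasDerivAt_pow 3 s).div_const 6).mul_const (g₃ 0)).congr_deriv (by ring)))
    (fun s hs => (h₂₁ s hs).2)
  exact ⟨(h₂₁ t right_mem_uIcc).1, (h₂₁ t right_mem_uIcc).2, h₀ t right_mem_uIcc⟩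

theorem abs_div_pow_le {e c : ℝ} {n k : ℕ} (ht : t ≠ 0) (h : |e| ≤ c * |t| ^ (n + k)) :
    |e / t ^ k| ≤ c * |t| ^ n := by
  rwa [abs_div, abs_pow, div_le_iff₀ (by positivity), mul_assoc, ← pow_add]

include hg hg₁ in
theorem abs_slope_sub_taylor_le (ht : t ≠ 0) (hg₂ : ∀ s ∈ uIcc 0 t, |g₂ s - g₂ 0| ≤ ε) :
    |(g t - g 0) / t - g₁ 0 - g₂ 0 * t / 2| ≤ ε * |t| := by
  have h := abs_div_pow_le (n := 1) (k := 1) ht (taylor_two_bounds hg hg₁ hg₂ t right_mem_uIcc).2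
  rw [pow_one] at h
  convert h using 2
  field_simp
  ring

include hg hg₁ in
theorem abs_deriv_slope_sub_le (ht : t ≠ 0) (hg₂ : ∀ s ∈ uIcc 0 t, |g₂ s - g₂ 0| ≤ ε) :
    |g₁ t / t - (g t - g 0) / t ^ 2 - g₂ 0 / 2| ≤ 2 * ε := by
  obtain ⟨h₁, h₀⟩ := taylor_two_bounds hg hg₁ hg₂ t right_mem_uIcc
  have e₁ := abs_div_pow_le (n := 0) (k := 1) ht h₁
  have e₀ := abs_div_pow_le (n := 0) (k := 2) ht h₀
  calc |g₁ t / t - (g t - g 0) / t ^ 2 - g₂ 0 / 2|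
      = |(g₁ t - g₁ 0 - t * g₂ 0) / t ^ 1 - (g t - g 0 - t * g₁ 0 - t ^ 2 / 2 * g₂ 0) / t ^ 2| := by
        congr 1; field_simp; ring
    _ ≤ 2 * ε := by
        simp only [pow_zero, mul_one, abs_le] at e₁ e₀ ⊢
        constructor <;> linarith

include hg hg₁ in
theorem abs_deriv2_slope_sub_le (ht : t ≠ 0) (hg₂ : ∀ s ∈ uIcc 0 t, HasDerivAt g₂ (g₃ s) s)
    (hg₃ : ∀ s ∈ uIcc 0 t, |g₃ s - g₃ 0| ≤ ε) :
    |g₂ t / t - 2 * g₁ t / t ^ 2 + 2 * (g t - g 0) / t ^ 3 - g₃ 0 / 3| ≤ 5 * ε := by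
  obtain ⟨h₂, h₁, h₀⟩ := taylor_three_bounds hg hg₁ hg₂ hg₃
  have e₂ := abs_div_pow_le (n := 0) (k := 1) ht h₂
  have e₁ := abs_div_pow_le (n := 0) (k := 2) ht h₁
  have e₀ := abs_div_pow_le (n := 0) (k := 3) ht h₀
  simp only [pow_zero, mul_one] at e₂ e₁ e₀
  calc |g₂ t / t - 2 * g₁ t / t ^ 2 + 2 * (g t - g 0) / t ^ 3 - g₃ 0 / 3|
      = |(g₂ t - g₂ 0 - t * g₃ 0) / t ^ 1
          - 2 * ((g₁ t - g₁ 0 - t * g₂ 0 - t ^ 2 / 2 * g₃ 0) / t ^ 2)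
          + 2 * ((g t - g 0 - t * g₁ 0 - t ^ 2 / 2 * g₂ 0 - t ^ 3 / 6 * g₃ 0) / t ^ 3)| := by
        congr 1; field_simp; ring
    _ ≤ 5 * ε := by
        rw [abs_le] at e₂ e₁ e₀ ⊢
        constructor <;> linarith

end Taylor

section Eventually

theorem eventually_forall_uIcc {P : ℝ → Prop} (h : ∀ᶠ s in 𝓝 (0 : ℝ), P s) :
    ∀ᶠ t in 𝓝 0, ∀ s ∈ uIcc 0 t, P s := by
  obtain ⟨l, r, hlr, hsub⟩ := mem_nhds_iff_exists_Ioo_subset.1 h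
  filter_upwards [Ioo_mem_nhds hlr.1 hlr.2] with t ht s hs
  exact hsub (ordConnected_Ioo.uIcc_subset hlr ht hs)

theorem Filter.Eventually.exists_pos_forall_abs_le {P : ℝ → Prop} (h : ∀ᶠ t in 𝓝[≠] 0, P t) :
    ∃ η > 0, ∀ t, t ≠ 0 → |t| ≤ η → P t := by
  obtain ⟨η, hη, hball⟩ := Metric.eventually_nhds_iff.1 (eventually_nhdsWithin_iff.1 h)
  refine ⟨η / 2, half_pos hη, fun t ht0 ht => hball ?_ ht0⟩
  rw [Real.dist_0_eq_abs]
  linarith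

end Eventually

section Cube

def square (δ : ℝ) : Set (ℝ × ℝ) := Icc (-δ) δ ×ˢ Icc (-δ) δ

def cube (δ : ℝ) : Set (ℝ × ℝ × ℝ) := Icc (-δ) δ ×ˢ square δ

noncomputable def dt (δ : ℝ) : (ℝ × ℝ × ℝ → ℝ) → ℝ × ℝ × ℝ → ℝ := partialWithin (cube δ) (1, 0)

variable {δ : ℝ} {G : ℝ × ℝ × ℝ → ℝ} {q : ℝ × ℝ}

theorem uniqueDiffOn_cube (hδ : 0 < δ) : UniqueDiffOn ℝ (cube δ) :=
  have h := uniqueDiffOn_Icc (neg_lt_self hδ)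
  h.prod (h.prod h)

theorem cube_subset_closure_interior (hδ : 0 < δ) : cube δ ⊆ closure (interior (cube δ)) := by
  simp only [cube, square, interior_prod_eq, closure_prod_eq, interior_Icc,
    closure_Ioo (neg_lt_self hδ).ne, subset_refl]

theorem hasDerivAt_slice (hG : DifferentiableOn ℝ G (cube δ)) (hq : q ∈ square δ) {s : ℝ}
    (hs : s ∈ Ioo (-δ) δ) : HasDerivAt (fun u => G (u, q)) (dt δ G (s, q)) s :=
  ((hG (s, q) (mk_mem_prod (Ioo_subset_Icc_self hs) hq)).hasDerivWithinAt_comp_partialWithin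
    ((hasDerivAt_id s).prodMk (hasDerivAt_const s q)).hasDerivWithinAt
    (fun _ hu => mk_mem_prod hu hq)).hasDerivAt (Icc_mem_nhds hs.1 hs.2)

theorem hasDerivWithinAt_line {c : ℝ → ℝ × ℝ} {w : ℝ × ℝ} (hc : ∀ u, HasDerivAt c w u)
    (hcS : MapsTo c (Icc (-δ) δ) (square δ)) (hG : DifferentiableOn ℝ G (cube δ)) {τ u : ℝ}
    (hτ : τ ∈ Icc (-δ) δ) (hu : u ∈ Icc (-δ) δ) :
    HasDerivWithinAt (fun u => G (τ, c u)) (partialWithin (cube δ) (0, w) G (τ, c u))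
      (Icc (-δ) δ) u :=
  (hG (τ, c u) (mk_mem_prod hτ (hcS hu))).hasDerivWithinAt_comp_partialWithin
    ((hasDerivAt_const u τ).prodMk (hc u)).hasDerivWithinAt (fun _ hv => mk_mem_prod hτ (hcS hv))

theorem iteratedDeriv_slice (hδ : 0 < δ) {k : ℕ} (hG : ContDiffOn ℝ k G (cube δ))
    (hq : q ∈ square δ) {s : ℝ} (hs : s ∈ Ioo (-δ) δ) :
    iteratedDeriv k (fun u => G (u, q)) s = (dt δ)^[k] G (s, q) := by
  induction k generalizing s with
  | zero => rfl
  | succ k ih =>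
    have hk : ContDiffOn ℝ 1 ((dt δ)^[k] G) (cube δ) :=
      hG.iterate_partialWithin (uniqueDiffOn_cube hδ) (by norm_cast; omega) _
    have heq : iteratedDeriv k (fun u => G (u, q)) =ᶠ[𝓝 s] fun u => (dt δ)^[k] G (u, q) :=
      eventually_of_mem (isOpen_Ioo.mem_nhds hs)
        fun r hr => ih (hG.of_le (by norm_cast; omega)) hr
    rw [iteratedDeriv_succ, heq.deriv_eq, Function.iterate_succ_apply',
      (hasDerivAt_slice (hk.differentiableOn one_ne_zero) hq hs).deriv]

/- `remainder δ G` is the `ρ_G` of the header; `remainderDeriv` and `remainderDeriv2` are its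
first two `t`-derivatives. -/
noncomputable def remainder (δ : ℝ) (G : ℝ × ℝ × ℝ → ℝ) (t : ℝ) (q : ℝ × ℝ) : ℝ :=
  (G (t, q) - G (0, q)) / t - dt δ G (0, q) - (dt δ)^[2] G (0, q) * t / 2

noncomputable def remainderDeriv (δ : ℝ) (G : ℝ × ℝ × ℝ → ℝ) (t : ℝ) (q : ℝ × ℝ) : ℝ :=
  dt δ G (t, q) / t - (G (t, q) - G (0, q)) / t ^ 2 - (dt δ)^[2] G (0, q) / 2

noncomputable def remainderDeriv2 (δ : ℝ) (G : ℝ × ℝ × ℝ → ℝ) (t : ℝ) (q : ℝ × ℝ) : ℝ :=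
  (dt δ)^[2] G (t, q) / t - 2 * dt δ G (t, q) / t ^ 2 + 2 * (G (t, q) - G (0, q)) / t ^ 3

theorem hasDerivAt_remainder (hG : ContDiffOn ℝ 1 G (cube δ)) (hq : q ∈ square δ) {t : ℝ}
    (ht0 : t ≠ 0) (ht : t ∈ Ioo (-δ) δ) :
    HasDerivAt (fun s => remainder δ G s q) (remainderDeriv δ G t q) t := by
  have hg := hasDerivAt_slice (hG.differentiableOn one_ne_zero) hq ht
  refine ((((hg.sub_const (G (0, q))).div (hasDerivAt_id' t) ht0).sub_const (dt δ G (0, q))).sub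
    (((hasDerivAt_id' t).const_mul ((dt δ)^[2] G (0, q))).div_const 2)).congr_deriv ?_
  rw [remainderDeriv]
  field_simp

theorem hasDerivAt_remainderDeriv (hδ : 0 < δ) (hG : ContDiffOn ℝ 2 G (cube δ))
    (hq : q ∈ square δ) {t : ℝ} (ht0 : t ≠ 0) (ht : t ∈ Ioo (-δ) δ) :
    HasDerivAt (fun s => remainderDeriv δ G s q) (remainderDeriv2 δ G t q) t := by
  have hg := hasDerivAt_slice (hG.differentiableOn two_ne_zero) hq ht
  have hG₁ : ContDiffOn ℝ 1 (dt δ G) (cube δ) :=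
    hG.partialWithin (uniqueDiffOn_cube hδ) (by norm_num) _
  have hg₁ := hasDerivAt_slice (hG₁.differentiableOn one_ne_zero) hq ht
  refine (((hg₁.div (hasDerivAt_id' t) ht0).sub
    ((hg.sub_const (G (0, q))).div (hasDerivAt_pow 2 t) (pow_ne_zero 2 ht0))).sub_const
    ((dt δ)^[2] G (0, q) / 2)).congr_deriv ?_
  rw [remainderDeriv2, Function.iterate_succ_apply', Function.iterate_one]
  field_simp
  ring

section Line

variable {c : ℝ → ℝ × ℝ} {w : ℝ × ℝ} (hc : ∀ u, HasDerivAt c w u)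
  (hcS : MapsTo c (Icc (-δ) δ) (square δ))

include hc hcS

theorem hasDerivWithinAt_remainder_line (hδ : 0 < δ) (hG : ContDiffOn ℝ 3 G (cube δ)) {t u : ℝ}
    (ht : t ∈ Icc (-δ) δ) (hu : u ∈ Icc (-δ) δ) :
    HasDerivWithinAt (fun u => remainder δ G t (c u))
      (remainder δ (partialWithin (cube δ) (0, w) G) t (c u)) (Icc (-δ) δ) u ∧
    HasDerivWithinAt (fun u => remainderDeriv δ G t (c u))
      (remainderDeriv δ (partialWithin (cube δ) (0, w) G) t (c u)) (Icc (-δ) δ) u := by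
  have h0 : (0 : ℝ) ∈ Icc (-δ) δ := ⟨by linarith, hδ.le⟩
  have hd : ∀ H, ContDiffOn ℝ 1 H (cube δ) → ∀ τ ∈ Icc (-δ) δ, HasDerivWithinAt
      (fun u => H (τ, c u)) (partialWithin (cube δ) (0, w) H (τ, c u)) (Icc (-δ) δ) u :=
    fun H hH τ hτ => hasDerivWithinAt_line hc hcS (hH.differentiableOn one_ne_zero) hτ hu
  have hG₀ : ContDiffOn ℝ 1 G (cube δ) := hG.of_le (by norm_num)
  have hG₁ : ContDiffOn ℝ 1 (dt δ G) (cube δ) :=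
    hG.partialWithin (uniqueDiffOn_cube hδ) (by norm_num) _
  have hG₂ : ContDiffOn ℝ 1 ((dt δ)^[2] G) (cube δ) :=
    hG.iterate_partialWithin (uniqueDiffOn_cube hδ) (by norm_num) _
  have comm₁ : EqOn (partialWithin (cube δ) (0, w) (dt δ G))
      (dt δ (partialWithin (cube δ) (0, w) G)) (cube δ) :=
    partialWithin_iterate_comm (k := 1) hG (by norm_num)
      (uniqueDiffOn_cube hδ) (cube_subset_closure_interior hδ) (0, w) (1, 0)
  have comm₂ : EqOn (partialWithin (cube δ) (0, w) ((dt δ)^[2] G))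
      ((dt δ)^[2] (partialWithin (cube δ) (0, w) G)) (cube δ) :=
    partialWithin_iterate_comm (k := 2) hG (by norm_num)
      (uniqueDiffOn_cube hδ) (cube_subset_closure_interior hδ) (0, w) (1, 0)
  have hmem₀ : (0, c u) ∈ cube δ := mk_mem_prod h0 (hcS hu)
  have hmem : (t, c u) ∈ cube δ := mk_mem_prod ht (hcS hu)
  constructor
  · refine (((((hd G hG₀ t ht).sub (hd G hG₀ 0 h0)).div_const t).sub
      (hd _ hG₁ 0 h0)).sub (((hd _ hG₂ 0 h0).mul_const t).div_const 2)).congr_deriv ?_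
    rw [remainder, comm₁ hmem₀, comm₂ hmem₀]
  · refine ((((hd _ hG₁ t ht).div_const t).sub (((hd G hG₀ t ht).sub
      (hd G hG₀ 0 h0)).div_const (t ^ 2))).sub ((hd _ hG₂ 0 h0).div_const 2)).congr_deriv ?_
    rw [remainderDeriv, comm₁ hmem, comm₂ hmem₀]

end Line

theorem eventually_forall_uIcc_abs_sub_lt (hδ : 0 < δ) {φ : ℝ × ℝ × ℝ → ℝ}
    (hφ : ContinuousOn φ (cube δ)) {ε : ℝ} (hε : 0 < ε) :
    ∀ᶠ t in 𝓝 0, ∀ s ∈ uIcc 0 t,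
      s ∈ Ioo (-δ) δ ∧ ∀ q ∈ square δ, |φ (s, q) - φ (0, q)| < ε := by
  have h0 : (0 : ℝ) ∈ Icc (-δ) δ := ⟨by linarith, hδ.le⟩
  obtain ⟨V, hV, hφV⟩ := (isCompact_Icc.prod isCompact_Icc).mem_uniformity_of_prod
    (f := fun s q => φ (s, q)) hφ h0 (Metric.dist_mem_uniformity hε)
  rw [nhdsWithin_eq_nhds.2 (Icc_mem_nhds (by linarith) hδ)] at hV
  refine eventually_forall_uIcc (Filter.Eventually.and (Ioo_mem_nhds (neg_lt_zero.2 hδ) hδ) ?_)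
  filter_upwards [hV] with s hs q hq
  exact Real.dist_eq _ _ ▸ hφV s hs q hq

theorem eventually_abs_remainder_le (hδ : 0 < δ) (hG : ContDiffOn ℝ 2 G (cube δ)) {ε : ℝ}
    (hε : 0 < ε) : ∀ᶠ t in 𝓝[≠] 0, ∀ q ∈ square δ,
      |remainder δ G t q| ≤ ε ∧ |remainderDeriv δ G t q| ≤ ε := by
  have hφ : ContinuousOn ((dt δ)^[2] G) (cube δ) :=
    (hG.iterate_partialWithin (m := 0) (uniqueDiffOn_cube hδ) (by norm_num) _).continuousOn
  have hG₁ : ContDiffOn ℝ 1 (dt δ G) (cube δ) :=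
    hG.partialWithin (uniqueDiffOn_cube hδ) (by norm_num) _
  filter_upwards [nhdsWithin_le_nhds ((eventually_forall_uIcc_abs_sub_lt hδ hφ (half_pos hε)).and
    (Ioo_mem_nhds neg_one_lt_zero one_pos : ∀ᶠ t in 𝓝 (0 : ℝ), t ∈ Ioo (-1) 1)),
    self_mem_nhdsWithin] with t ⟨ht, ht1⟩ ht0 q hq
  have hg := fun s hs => hasDerivAt_slice (hG.differentiableOn two_ne_zero) hq (ht s hs).1
  have hg₁ := fun s hs => hasDerivAt_slice (hG₁.differentiableOn one_ne_zero) hq (ht s hs).1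
  have hg₂ : ∀ s ∈ uIcc 0 t, |(dt δ)^[2] G (s, q) - (dt δ)^[2] G (0, q)| ≤ ε / 2 :=
    fun s hs => ((ht s hs).2 q hq).le
  have ht1' : |t| ≤ 1 := (abs_lt.2 ht1).le
  constructor
  · calc |remainder δ G t q| ≤ ε / 2 * |t| := abs_slope_sub_taylor_le hg hg₁ ht0 hg₂
      _ ≤ ε := by nlinarith
  · calc |remainderDeriv δ G t q| ≤ 2 * (ε / 2) := abs_deriv_slope_sub_le hg hg₁ ht0 hg₂
      _ = ε := by ring

theorem eventually_abs_remainderDeriv2_sub_le (hδ : 0 < δ) (hG : ContDiffOn ℝ 3 G (cube δ))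
    {ε : ℝ} (hε : 0 < ε) : ∀ᶠ t in 𝓝[≠] 0, ∀ q ∈ square δ,
      |remainderDeriv2 δ G t q - (dt δ)^[3] G (0, q) / 3| ≤ ε := by
  have hφ : ContinuousOn ((dt δ)^[3] G) (cube δ) :=
    (hG.iterate_partialWithin (m := 0) (uniqueDiffOn_cube hδ) (by norm_num) _).continuousOn
  have hG₁ : ContDiffOn ℝ 1 (dt δ G) (cube δ) :=
    hG.partialWithin (uniqueDiffOn_cube hδ) (by norm_num) _
  have hG₂ : ContDiffOn ℝ 1 ((dt δ)^[2] G) (cube δ) :=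
    hG.iterate_partialWithin (uniqueDiffOn_cube hδ) (by norm_num) _
  filter_upwards [nhdsWithin_le_nhds (eventually_forall_uIcc_abs_sub_lt hδ hφ
    (div_pos hε (by norm_num : (0 : ℝ) < 5))), self_mem_nhdsWithin] with t ht ht0 q hq
  have hg := fun s hs => hasDerivAt_slice (hG.differentiableOn three_ne_zero) hq (ht s hs).1
  have hg₁ := fun s hs => hasDerivAt_slice (hG₁.differentiableOn one_ne_zero) hq (ht s hs).1
  have hg₂ := fun s hs => hasDerivAt_slice (hG₂.differentiableOn one_ne_zero) hq (ht s hs).1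
  have hg₃ : ∀ s ∈ uIcc 0 t, |(dt δ)^[3] G (s, q) - (dt δ)^[3] G (0, q)| ≤ ε / 5 :=
    fun s hs => ((ht s hs).2 q hq).le
  calc |remainderDeriv2 δ G t q - (dt δ)^[3] G (0, q) / 3| ≤ 5 * (ε / 5) :=
        abs_deriv2_slope_sub_le hg hg₁ ht0 hg₂ hg₃
    _ = ε := by ring

theorem eventually_line_remainders_le (hδ : 0 < δ) (hG : ContDiffOn ℝ 4 G (cube δ)) (w : ℝ × ℝ)
    {ε : ℝ} (hε : 0 < ε) : ∀ᶠ t in 𝓝[≠] 0, ∀ q ∈ square δ,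
      |remainder δ (partialWithin (cube δ) (0, w) G) t q| ≤ ε ∧
      |remainderDeriv δ (partialWithin (cube δ) (0, w) G) t q| ≤ ε ∧
      |remainder δ (partialWithin (cube δ) (0, w) (partialWithin (cube δ) (0, w) G)) t q| ≤ ε := by
  have hDG : ContDiffOn ℝ 3 (partialWithin (cube δ) (0, w) G) (cube δ) :=
    hG.partialWithin (uniqueDiffOn_cube hδ) (by norm_num) _
  have hDDG := hDG.partialWithin (m := 2) (uniqueDiffOn_cube hδ) (by norm_num) (0, w)
  filter_upwards [eventually_abs_remainder_le hδ (hDG.of_le (by norm_num)) hε,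
    eventually_abs_remainder_le hδ hDDG hε] with t h₁ h₂ q hq
  exact ⟨(h₁ q hq).1, (h₁ q hq).2, (h₂ q hq).1⟩

section EqRemainder

variable {P : ℝ → ℝ × ℝ → ℝ} (hP : ∀ t ≠ 0, ∀ q ∈ square δ, P t q = remainder δ G t q)
include hP

theorem hasDerivAt_of_eq_remainder (hG : ContDiffOn ℝ 1 G (cube δ)) (hq : q ∈ square δ)
    {t : ℝ} (ht0 : t ≠ 0) (ht : t ∈ Ioo (-δ) δ) :
    HasDerivAt (fun s => P s q) (remainderDeriv δ G t q) t :=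
  (hasDerivAt_remainder hG hq ht0 ht).congr_of_eventuallyEq
    (by filter_upwards [eventually_ne_nhds ht0] with s hs using hP s hs q hq)

theorem abs_time_derivs_le (hδ : 0 < δ) (hG : ContDiffOn ℝ 3 G (cube δ)) (hq : q ∈ square δ)
    {t ε : ℝ} (ht0 : t ≠ 0) (ht : t ∈ Ioo (-δ) δ)
    (h₀₁ : |remainder δ G t q| ≤ ε ∧ |remainderDeriv δ G t q| ≤ ε)
    (h₂ : |remainderDeriv2 δ G t q - (dt δ)^[3] G (0, q) / 3| ≤ ε) :
    |P t q| ≤ ε ∧ |deriv (fun s => P s q) t| ≤ ε ∧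
      |iteratedDeriv 2 (fun s => P s q) t - iteratedDeriv 3 (fun s => G (s, q)) 0 / 3| ≤ ε := by
  have hG₁ : ContDiffOn ℝ 1 G (cube δ) := hG.of_le (by norm_num)
  have hderiv : deriv (fun s => P s q) =ᶠ[𝓝 t] fun s => remainderDeriv δ G s q := by
    filter_upwards [eventually_ne_nhds ht0, isOpen_Ioo.mem_nhds ht] with s hs0 hs
    exact (hasDerivAt_of_eq_remainder hP hG₁ hq hs0 hs).deriv
  refine ⟨hP t ht0 q hq ▸ h₀₁.1, (hasDerivAt_of_eq_remainder hP hG₁ hq ht0 ht).deriv ▸ h₀₁.2, ?_⟩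
  rwa [iteratedDeriv_succ, iteratedDeriv_one, hderiv.deriv_eq,
    (hasDerivAt_remainderDeriv hδ (hG.of_le (by norm_num)) hq ht0 ht).deriv,
    iteratedDeriv_slice hδ hG hq ⟨neg_lt_zero.2 hδ, hδ⟩]

theorem abs_line_derivs_le (hδ : 0 < δ) (hG : ContDiffOn ℝ 4 G (cube δ)) {c : ℝ → ℝ × ℝ}
    {w : ℝ × ℝ} (hc : ∀ u, HasDerivAt c w u) (hcS : MapsTo c (Icc (-δ) δ) (square δ))
    {t u ε : ℝ} (ht0 : t ≠ 0) (ht : t ∈ Ioo (-δ) δ) (hu : u ∈ Icc (-δ) δ)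
    (h : |remainder δ (partialWithin (cube δ) (0, w) G) t (c u)| ≤ ε ∧
      |remainderDeriv δ (partialWithin (cube δ) (0, w) G) t (c u)| ≤ ε ∧
      |remainder δ (partialWithin (cube δ) (0, w) (partialWithin (cube δ) (0, w) G)) t (c u)| ≤ ε) :
    |deriv (fun u => P t (c u)) u| ≤ ε ∧ |deriv (fun u => deriv (fun s => P s (c u)) t) u| ≤ ε ∧
      |iteratedDeriv 2 (fun u => P t (c u)) u| ≤ ε := by
  have hG₃ : ContDiffOn ℝ 3 G (cube δ) := hG.of_le (by norm_num)
  have hG₁ : ContDiffOn ℝ 1 G (cube δ) := hG.of_le (by norm_num)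
  have hDG : ContDiffOn ℝ 3 (partialWithin (cube δ) (0, w) G) (cube δ) :=
    hG.partialWithin (uniqueDiffOn_cube hδ) (by norm_num) _
  have htI : t ∈ Icc (-δ) δ := Ioo_subset_Icc_self ht
  have hIcc : UniqueDiffOn ℝ (Icc (-δ) δ) := uniqueDiffOn_Icc (neg_lt_self hδ)
  have hline : ∀ v ∈ Icc (-δ) δ, HasDerivWithinAt (fun u => P t (c u))
      (remainder δ (partialWithin (cube δ) (0, w) G) t (c v)) (Icc (-δ) δ) v := fun v hv =>
    (hasDerivWithinAt_remainder_line hc hcS hδ hG₃ htI hv).1.congr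
      (fun z hz => hP t ht0 (c z) (hcS hz)) (hP t ht0 (c v) (hcS hv))
  have hmixed : HasDerivWithinAt (fun u => deriv (fun s => P s (c u)) t)
      (remainderDeriv δ (partialWithin (cube δ) (0, w) G) t (c u)) (Icc (-δ) δ) u :=
    (hasDerivWithinAt_remainder_line hc hcS hδ hG₃ htI hu).2.congr
      (fun z hz => (hasDerivAt_of_eq_remainder hP hG₁ (hcS hz) ht0 ht).deriv)
      (hasDerivAt_of_eq_remainder hP hG₁ (hcS hu) ht0 ht).deriv
  have hsecond : HasDerivWithinAt (fun u => remainder δ (partialWithin (cube δ) (0, w) G) t (c u))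
      (remainder δ (partialWithin (cube δ) (0, w) (partialWithin (cube δ) (0, w) G)) t (c u))
      (insert u (Ioo (-δ) δ)) u :=
    (hasDerivWithinAt_remainder_line hc hcS hδ hDG htI hu).1.mono
      (insert_subset hu Ioo_subset_Icc_self)
  refine ⟨?_, ?_, ?_⟩
  · simpa only [Real.norm_eq_abs] using ((hline u hu).norm_deriv_le (hIcc u hu)).trans h.1
  · simpa only [Real.norm_eq_abs] using (hmixed.norm_deriv_le (hIcc u hu)).trans h.2.1
  · have hcl : u ∈ closure (Ioo (-δ) δ) := by rwa [closure_Ioo (neg_lt_self hδ).ne]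
    have hfg : EqOn (deriv fun u => P t (c u))
        (fun u => remainder δ (partialWithin (cube δ) (0, w) G) t (c u)) (Ioo (-δ) δ) :=
      fun v hv => ((hline v (Ioo_subset_Icc_self hv)).hasDerivAt (Icc_mem_nhds hv.1 hv.2)).deriv
    rw [iteratedDeriv_succ, iteratedDeriv_one]
    simpa only [Real.norm_eq_abs] using (hsecond.norm_deriv_deriv_le hfg
      (uniqueDiffWithinAt_convex (convex_Ioo _ _) (by simpa using neg_lt_self hδ) hcl) hcl).trans
      h.2.2

end EqRemainder

theorem eq_remainder_of_initial (hδ : 0 < δ) {X : ℝ → ℝ → ℝ → ℝ}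
    (hX : ContDiffOn ℝ 2 (fun p : ℝ × ℝ × ℝ => X p.1 p.2.1 p.2.2) (cube δ))
    (hinit : ∀ x y : ℝ, X 0 x y = x) {ρ : ℝ → ℝ → ℝ → ℝ}
    (hρ : ∀ t x y : ℝ, t ≠ 0 → ρ t x y =
      (X t x y - x) / t - deriv (fun s => X s x y) 0 -
        iteratedDeriv 2 (fun s => X s x y) 0 * t / 2) :
    ∀ t ≠ 0, ∀ q ∈ square δ, ρ t q.1 q.2 = remainder δ (fun p => X p.1 p.2.1 p.2.2) t q := by
  intro t ht q hq
  have h0 : (0 : ℝ) ∈ Ioo (-δ) δ := ⟨neg_lt_zero.2 hδ, hδ⟩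
  have h₁ := iteratedDeriv_slice (k := 1) hδ (hX.of_le (by norm_num)) hq h0
  have h₂ := iteratedDeriv_slice (k := 2) hδ hX hq h0
  rw [iteratedDeriv_one] at h₁
  rw [hρ t _ _ ht, h₁, h₂, remainder, hinit]
  rfl

end Cube

/-- Appendix B.1: properties of the remainder
`ρ(t,x,y) = (X(t,x,y) - x)/t - X'_t(0,x,y) - X''_tt(0,x,y)·t/2`:
it tends to `0` together with `ρ'_t`, `ρ'_y`, `ρ''_ty`, `ρ''_yy`, `ρ'_x`, `ρ''_tx`,
`ρ''_xx` as `t → 0`, uniformly in `(x,y) ∈ [-δ,δ]²`, while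
`ρ''_tt → X'''_ttt(0,x,y)/3`. -/
theorem stmt_15
    (δ : ℝ) (hδ : 0 < δ)
    (X : ℝ → ℝ → ℝ → ℝ)
    (hX : ContDiffOn ℝ 4 (fun p : ℝ × ℝ × ℝ => X p.1 p.2.1 p.2.2)
      (Icc (-δ) δ ×ˢ Icc (-δ) δ ×ˢ Icc (-δ) δ))
    (hinit : ∀ x y : ℝ, X 0 x y = x)
    (ρ : ℝ → ℝ → ℝ → ℝ)
    (hρ : ∀ t x y : ℝ, t ≠ 0 → ρ t x y =
      (X t x y - x) / t - deriv (fun s => X s x y) 0 -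
        iteratedDeriv 2 (fun s => X s x y) 0 * t / 2) :
    ∀ ε > (0 : ℝ), ∃ η > (0 : ℝ), ∀ t x y : ℝ,
      t ≠ 0 → |t| ≤ η → |x| ≤ δ → |y| ≤ δ →
      |ρ t x y| ≤ ε ∧
      |deriv (fun s => ρ s x y) t| ≤ ε ∧
      |deriv (fun z => ρ t x z) y| ≤ ε ∧
      |deriv (fun z => deriv (fun s => ρ s x z) t) y| ≤ ε ∧
      |iteratedDeriv 2 (fun z => ρ t x z) y| ≤ ε ∧
      |deriv (fun w => ρ t w y) x| ≤ ε ∧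
      |deriv (fun w => deriv (fun s => ρ s w y) t) x| ≤ ε ∧
      |iteratedDeriv 2 (fun w => ρ t w y) x| ≤ ε ∧
      |iteratedDeriv 2 (fun s => ρ s x y) t -
        iteratedDeriv 3 (fun s => X s x y) 0 / 3| ≤ ε := by
  intro ε hε
  have hF : ContDiffOn ℝ 4 (fun p : ℝ × ℝ × ℝ => X p.1 p.2.1 p.2.2) (cube δ) := hX
  have hP := eq_remainder_of_initial hδ (hF.of_le (by norm_num)) hinit hρ
  obtain ⟨η, hη, hsmall⟩ := Filter.Eventually.exists_pos_forall_abs_le <|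
    (eventually_abs_remainder_le hδ (hF.of_le (by norm_num)) hε).and <|
    (eventually_abs_remainderDeriv2_sub_le hδ (hF.of_le (by norm_num)) hε).and <|
    (eventually_line_remainders_le hδ hF (0, 1) hε).and <|
    (eventually_line_remainders_le hδ hF (1, 0) hε).and <|
    nhdsWithin_le_nhds (Ioo_mem_nhds (neg_lt_zero.2 hδ) hδ)
  refine ⟨η, hη, fun t x y ht0 htη hx hy => ?_⟩
  obtain ⟨hT, hT₂, hLy, hLx, ht⟩ := hsmall t ht0 htη
  have hq : (x, y) ∈ square δ := ⟨abs_le.1 hx, abs_le.1 hy⟩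
  obtain ⟨h₁, h₂, h₉⟩ :=
    abs_time_derivs_le hP hδ (hF.of_le (by norm_num)) hq ht0 ht (hT _ hq) (hT₂ _ hq)
  obtain ⟨h₃, h₄, h₅⟩ := abs_line_derivs_le hP hδ hF (c := fun z => (x, z))
    (fun u => (hasDerivAt_const u x).prodMk (hasDerivAt_id' u)) (fun _ hz => mk_mem_prod hq.1 hz)
    ht0 ht hq.2 (hLy _ hq)
  obtain ⟨h₆, h₇, h₈⟩ := abs_line_derivs_le hP hδ hF (c := fun z => (z, y))
    (fun u => (hasDerivAt_id' u).prodMk (hasDerivAt_const u y)) (fun _ hz => mk_mem_prod hz hq.2)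
    ht0 ht hq.1 (hLx _ hq)
  exact ⟨h₁, h₂, h₃, h₄, h₅, h₆, h₇, h₈, h₉⟩
end
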